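/- arXiv:1808.02538 — 11 statements merged into one kernel-verified Lean document; each statement's English description precedes it below -/
import Mathlib

section
/- Fix constants K_dB ∈ ℝ, n_PL > 0, d_src > 0, θ_src ∈ (0,π), σ_SH > 0, β_SH > 0, and define the path-loss function γ_PL(d) = K_dB − 5·n_PL·log₁₀(d_src² + d² − 2·d_src·d·cos θ_src) for d ≥ 0 (the argument of the logarithm is strictly positive since θ_src ∈ (0,π)). For l ≥ 0 and η ∈ ℝ, define the transition density f(γ, d | η, l) for d > l as the Gaussian probability density in γ with mean μ(d) = γ_PL(d) + e^{−(d−l)/β_SH}(η − γ_PL(l)) and variance v(d) = σ_SH²(1 − e^{−2(d−l)/β_SH}). Then for all d > l and all γ ∈ ℝ, f satisfies the forward Fokker–Planck partial differential equation ∂f/∂d (γ,d|η,l) = −∂/∂γ [A(γ,d)·f(γ,d|η,l)] + (1/2)·B·∂²f/∂γ² (γ,d|η,l), where A(γ,d) = γ_PL′(d) − (γ − γ_PL(d))/β_SH, B = 2σ_SH²/β_SH, and γ_PL′(d) = −10·n_PL·log₁₀(e)·(d − d_src cos θ_src)/(d_src² + d² − 2 d_src d cos θ_src). -/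
/-!
A Gaussian density `φ(m, v, x)` satisfies `∂ₘφ = -∂ₓφ` and `∂ᵥφ = ½ ∂ₓ²φ`, so along a curve
`(m(d), v(d))` its `d`-derivative is `-m' ∂ₓφ + ½ v' ∂ₓ²φ`. For an affine drift
`A(x) = a - (x - c)/τ` and constant diffusion `B`, the Fokker–Planck right-hand side expands to the
same expression when the moments obey `m' = a - (m - c)/τ` and `v' = B - 2v/τ`. The path-loss
mean `γ_PL(d) + e^{-(d-l)/β}(η - γ_PL(l))` and the variance `σ²(1 - e^{-2(d-l)/β})` solve these
with `a = γ_PL'(d)`, `c = γ_PL(d)`, `τ = β`, `B = 2σ²/β`.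
-/

open Real

noncomputable def gaussianDensity (m v x : ℝ) : ℝ :=
  (√(2 * π * v))⁻¹ * exp (-(x - m) ^ 2 / (2 * v))

theorem hasDerivAt_gaussianDensity (m v x : ℝ) :
    HasDerivAt (gaussianDensity m v) (-(x - m) / v * gaussianDensity m v x) x := by
  have h := ((((hasDerivAt_id' x).sub_const m).fun_pow 2).fun_neg.div_const (2 * v)).exp.const_mul
    (√(2 * π * v))⁻¹
  refine h.congr_deriv ?_
  simp only [gaussianDensity]
  ring

theorem deriv_gaussianDensity (m v : ℝ) :
    deriv (gaussianDensity m v) = fun x => -(x - m) / v * gaussianDensity m v x :=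
  funext fun x => (hasDerivAt_gaussianDensity m v x).deriv

theorem hasDerivAt_deriv_gaussianDensity (m v x : ℝ) :
    HasDerivAt (deriv (gaussianDensity m v))
      (((x - m) ^ 2 / v ^ 2 - 1 / v) * gaussianDensity m v x) x := by
  rw [deriv_gaussianDensity]
  have h := (((hasDerivAt_id' x).sub_const m).fun_neg.div_const v).fun_mul
    (hasDerivAt_gaussianDensity m v x)
  refine h.congr_deriv ?_
  ring

theorem hasDerivAt_gaussianDensity_param {m w : ℝ → ℝ} {m' w' t : ℝ}
    (hm : HasDerivAt m m' t) (hw : HasDerivAt w w' t) (hpos : 0 < w t) (x : ℝ) :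
    HasDerivAt (fun s => gaussianDensity (m s) (w s) x)
      (-m' * deriv (gaussianDensity (m t) (w t)) x +
        w' / 2 * deriv (deriv (gaussianDensity (m t) (w t))) x) t := by
  rw [(hasDerivAt_deriv_gaussianDensity _ _ x).deriv, deriv_gaussianDensity]
  have hvar : 0 < 2 * π * w t := by positivity
  have hnorm := ((hw.const_mul (2 * π)).sqrt hvar.ne').fun_inv (sqrt_pos.mpr hvar).ne'
  have hexp := ((((hm.const_sub x).fun_pow 2).fun_neg).fun_div (hw.const_mul 2) (by positivity)).exp
  refine (hnorm.fun_mul hexp).congr_deriv ?_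
  have hsq : √(2 * π * w t) ^ 2 = 2 * π * w t := sq_sqrt hvar.le
  simp only [gaussianDensity]
  field_simp
  rw [hsq]
  ring

theorem gaussianDensity_fokkerPlanck {m w : ℝ → ℝ} {a c τ B t : ℝ}
    (hm : HasDerivAt m (a - (m t - c) / τ) t) (hw : HasDerivAt w (B - 2 * w t / τ) t)
    (hpos : 0 < w t) (x : ℝ) :
    deriv (fun s => gaussianDensity (m s) (w s) x) t =
      -deriv (fun y => (a - (y - c) / τ) * gaussianDensity (m t) (w t) y) x +
        1 / 2 * B * deriv (deriv (gaussianDensity (m t) (w t))) x := by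
  have hdrift : HasDerivAt (fun y => a - (y - c) / τ) (-(1 / τ)) x := by
    simpa using ((hasDerivAt_id' x).sub_const c).div_const τ |>.const_sub a
  rw [(hasDerivAt_gaussianDensity_param hm hw hpos x).deriv,
    (hdrift.fun_mul (hasDerivAt_gaussianDensity _ _ x)).deriv,
    (hasDerivAt_deriv_gaussianDensity _ _ x).deriv, deriv_gaussianDensity]
  field_simp
  ring

theorem sq_add_sq_sub_two_mul_mul_cos_pos {a θ : ℝ} (ha : a ≠ 0) (hθ : sin θ ≠ 0) (x : ℝ) :
    0 < a ^ 2 + x ^ 2 - 2 * a * x * cos θ := by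
  have : 0 < (a * sin θ) ^ 2 := by positivity
  nlinarith [sq_nonneg (x - a * cos θ), sin_sq_add_cos_sq θ]

theorem hasDerivAt_pathLoss (K n : ℝ) {a θ x : ℝ} (hx : a ^ 2 + x ^ 2 - 2 * a * x * cos θ ≠ 0) :
    HasDerivAt (fun y => K - 5 * n * (log (a ^ 2 + y ^ 2 - 2 * a * y * cos θ) / log 10))
      (-10 * n * (1 / log 10) * ((x - a * cos θ) / (a ^ 2 + x ^ 2 - 2 * a * x * cos θ))) x := by
  have hQ : HasDerivAt (fun y => a ^ 2 + y ^ 2 - 2 * a * y * cos θ) (2 * x - 2 * a * cos θ) x := by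
    simpa using ((hasDerivAt_pow 2 x).const_add (a ^ 2)).fun_sub
      (((hasDerivAt_id' x).const_mul (2 * a)).mul_const (cos θ))
  refine (((hQ.log hx).div_const (log 10)).const_mul (5 * n) |>.const_sub K).congr_deriv ?_
  field_simp
  ring

theorem hasDerivAt_add_exp_decay_mul {m g : ℝ → ℝ} {g' l τ k t : ℝ}
    (hm : ∀ s, m s = g s + exp (-(s - l) / τ) * k) (hg : HasDerivAt g g' t) :
    HasDerivAt m (g' - (m t - g t) / τ) t := by
  have hdecay : HasDerivAt (fun s => -(s - l) / τ) (-1 / τ) t := by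
    simpa using ((hasDerivAt_id' t).sub_const l).fun_neg.div_const τ
  rw [funext hm]
  refine (hg.fun_add (hdecay.exp.mul_const k)).congr_deriv ?_
  ring

theorem hasDerivAt_sq_mul_one_sub_exp_decay {w : ℝ → ℝ} {σ l τ t : ℝ}
    (hw : ∀ s, w s = σ ^ 2 * (1 - exp (-2 * (s - l) / τ))) :
    HasDerivAt w (2 * σ ^ 2 / τ - 2 * w t / τ) t := by
  have hdecay : HasDerivAt (fun s => -2 * (s - l) / τ) (-2 / τ) t := by
    simpa using (((hasDerivAt_id' t).sub_const l).const_mul (-2)).div_const τ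
  rw [funext hw]
  refine ((hdecay.exp.const_sub 1).const_mul (σ ^ 2)).congr_deriv ?_
  ring

theorem sq_mul_one_sub_exp_decay_pos {σ l τ t : ℝ} (hσ : σ ≠ 0) (hτ : 0 < τ) (ht : l < t) :
    0 < σ ^ 2 * (1 - exp (-2 * (t - l) / τ)) := by
  have hdecay : exp (-2 * (t - l) / τ) < 1 :=
    exp_lt_one_iff.mpr (div_neg_of_neg_of_pos (by linarith) hτ)
  exact mul_pos (by positivity) (sub_pos.mpr hdecay)

theorem stmt_2_general (KdB nPL dsrc θsrc σSH βSH l η : ℝ)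
    (hdsrc : 0 < dsrc) (hθ : θsrc ∈ Set.Ioo 0 π)
    (hσ : 0 < σSH) (hβ : 0 < βSH)
    -- the path-loss function `γ_PL(d) = K_dB − 5 n_PL log₁₀(d_src² + d² − 2 d_src d cos θ_src)`
    (γPL : ℝ → ℝ)
    (hγPL : ∀ d, γPL d = KdB - 5 * nPL *
      (Real.log (dsrc ^ 2 + d ^ 2 - 2 * dsrc * d * Real.cos θsrc) / Real.log 10))
    -- its derivative (`log₁₀ e = 1 / log 10`)
    (γPL' : ℝ → ℝ)
    (hγPL' : ∀ d, γPL' d = -10 * nPL * (1 / Real.log 10) *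
      ((d - dsrc * Real.cos θsrc) / (dsrc ^ 2 + d ^ 2 - 2 * dsrc * d * Real.cos θsrc)))
    -- mean and variance of the transition density
    (μ v : ℝ → ℝ)
    (hμ : ∀ d, μ d = γPL d + Real.exp (-(d - l) / βSH) * (η - γPL l))
    (hv : ∀ d, v d = σSH ^ 2 * (1 - Real.exp (-2 * (d - l) / βSH)))
    -- the transition density `f(γ, d | η, l)` as a Gaussian density in `γ`
    (f : ℝ → ℝ → ℝ)
    (hf : ∀ γ d, f γ d =
      (Real.sqrt (2 * π * v d))⁻¹ * Real.exp (-(γ - μ d) ^ 2 / (2 * v d)))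
    -- drift and diffusion coefficients
    (A : ℝ → ℝ → ℝ) (hA : ∀ γ d, A γ d = γPL' d - (γ - γPL d) / βSH)
    (Bc : ℝ) (hBc : Bc = 2 * σSH ^ 2 / βSH) :
    ∀ d, l < d → ∀ γ : ℝ,
      deriv (fun d' => f γ d') d =
        -deriv (fun γ' => A γ' d * f γ' d) γ +
          (1 / 2) * Bc * deriv (deriv fun γ' => f γ' d) γ := by
  intro d hd γ
  have hQ := sq_add_sq_sub_two_mul_mul_cos_pos hdsrc.ne' (sin_pos_of_pos_of_lt_pi hθ.1 hθ.2).ne' d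
  have hγPL_deriv : HasDerivAt γPL (γPL' d) d := by
    rw [funext hγPL, hγPL']
    exact hasDerivAt_pathLoss KdB nPL hQ.ne'
  have hv_pos : 0 < v d := hv d ▸ sq_mul_one_sub_exp_decay_pos hσ.ne' hβ hd
  obtain rfl : f = fun γ d => gaussianDensity (μ d) (v d) γ := funext₂ hf
  obtain rfl : A = fun γ d => γPL' d - (γ - γPL d) / βSH := funext₂ hA
  subst hBc
  exact gaussianDensity_fokkerPlanck (hasDerivAt_add_exp_decay_mul hμ hγPL_deriv)
    (hasDerivAt_sq_mul_one_sub_exp_decay hv) hv_pos γ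

/-- The Gaussian transition density of the path-loss-plus-shadowing channel
power process satisfies the forward Fokker–Planck equation. -/
theorem stmt_2 (KdB nPL dsrc θsrc σSH βSH l η : ℝ)
    (hnPL : 0 < nPL) (hdsrc : 0 < dsrc) (hθ : θsrc ∈ Set.Ioo 0 π)
    (hσ : 0 < σSH) (hβ : 0 < βSH) (hl : 0 ≤ l)
    -- the path-loss function `γ_PL(d) = K_dB − 5 n_PL log₁₀(d_src² + d² − 2 d_src d cos θ_src)`
    (γPL : ℝ → ℝ)
    (hγPL : ∀ d, γPL d = KdB - 5 * nPL *
      (Real.log (dsrc ^ 2 + d ^ 2 - 2 * dsrc * d * Real.cos θsrc) / Real.log 10))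
    -- its derivative (`log₁₀ e = 1 / log 10`)
    (γPL' : ℝ → ℝ)
    (hγPL' : ∀ d, γPL' d = -10 * nPL * (1 / Real.log 10) *
      ((d - dsrc * Real.cos θsrc) / (dsrc ^ 2 + d ^ 2 - 2 * dsrc * d * Real.cos θsrc)))
    -- mean and variance of the transition density
    (μ v : ℝ → ℝ)
    (hμ : ∀ d, μ d = γPL d + Real.exp (-(d - l) / βSH) * (η - γPL l))
    (hv : ∀ d, v d = σSH ^ 2 * (1 - Real.exp (-2 * (d - l) / βSH)))
    -- the transition density `f(γ, d | η, l)` as a Gaussian density in `γ`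
    (f : ℝ → ℝ → ℝ)
    (hf : ∀ γ d, f γ d =
      (Real.sqrt (2 * π * v d))⁻¹ * Real.exp (-(γ - μ d) ^ 2 / (2 * v d)))
    -- drift and diffusion coefficients
    (A : ℝ → ℝ → ℝ) (hA : ∀ γ d, A γ d = γPL' d - (γ - γPL d) / βSH)
    (Bc : ℝ) (hBc : Bc = 2 * σSH ^ 2 / βSH) :
    ∀ d, l < d → ∀ γ : ℝ,
      deriv (fun d' => f γ d') d =
        -deriv (fun γ' => A γ' d * f γ' d) γ +
          (1 / 2) * Bc * deriv (deriv fun γ' => f γ' d) γ :=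
  stmt_2_general KdB nPL dsrc θsrc σSH βSH l η hdsrc hθ hσ hβ γPL hγPL γPL' hγPL' μ v hμ hv f hf A
    hA Bc hBc
end

section
/- Let r : ℝ → ℝ² be a twice continuously differentiable planar curve parameterized by arc length, i.e., ‖r′(s)‖ = 1 for all s, and suppose its curvature is bounded by κ > 0, i.e., ‖r″(s)‖ ≤ κ for all s. Then for every s ∈ [0, π/κ], the chord length satisfies ‖r(s) − r(0)‖ ≥ (2/κ)·sin(κ s / 2). -/
/-! Write `T = r'` and `w = T (s / 2)`. The unit vector `T t` moves with speed at most `κ`, so the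
angle `arccos ⟪T t, w⟫` grows at most like `κ |t - s / 2| ≤ π / 2`, i.e.
`⟪T t, w⟫ ≥ cos (κ (t - s / 2))` on `[0, s]`. Integrating,
`‖r s - r 0‖ ≥ ⟪r s - r 0, w⟫ = ∫₀ˢ ⟪T t, w⟫ ≥ ∫₀ˢ cos (κ (t - s / 2)) = (2 / κ) sin (κ s / 2)`. -/

open Real Set
open scoped RealInnerProductSpace

theorem nonpos_of_deriv_nonpos_where_pos {f : ℝ → ℝ} {a b : ℝ} (hab : a ≤ b)
    (hf : ContinuousOn f (Icc a b)) (ha : f a ≤ 0)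
    (hf' : ∀ x ∈ Ioo a b, 0 < f x → DifferentiableAt ℝ f x ∧ deriv f x ≤ 0) : f b ≤ 0 := by
  by_contra! hb
  have hS : IsCompact (Icc a b ∩ f ⁻¹' Iic 0) :=
    isCompact_Icc.of_isClosed_subset
      (hf.preimage_isClosed_of_isClosed isClosed_Icc isClosed_Iic) inter_subset_left
  obtain ⟨x₀, ⟨hx₀, hfx₀⟩, hmax⟩ := hS.exists_isGreatest ⟨a, ⟨left_mem_Icc.2 hab, ha⟩⟩
  have hx₀b : x₀ < b := hx₀.2.lt_of_ne (by rintro rfl; exact hfx₀.not_gt hb)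
  have hpos : ∀ x ∈ Ioo x₀ b, 0 < f x := fun x hx => by
    by_contra! hfx
    exact (hmax ⟨⟨hx₀.1.trans hx.1.le, hx.2.le⟩, hfx⟩).not_gt hx.1
  have hf'' : ∀ x ∈ Ioo x₀ b, DifferentiableAt ℝ f x ∧ deriv f x ≤ 0 := fun x hx =>
    hf' x ⟨hx₀.1.trans_lt hx.1, hx.2⟩ (hpos x hx)
  obtain ⟨c, hc, hslope⟩ := exists_deriv_eq_slope f hx₀b
    (hf.mono (Icc_subset_Icc_left hx₀.1)) fun x hx => (hf'' x hx).1.differentiableWithinAt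
  have hdecr : (f b - f x₀) / (b - x₀) ≤ 0 := hslope ▸ (hf'' c hc).2
  rw [div_le_iff₀ (sub_pos.2 hx₀b), zero_mul] at hdecr
  exact hb.not_ge (by linarith [show f x₀ ≤ 0 from hfx₀])

theorem cos_mul_sub_le_of_abs_deriv_le {g : ℝ → ℝ} {κ a b : ℝ} (hκ : 0 ≤ κ)
    (hg : Differentiable ℝ g) (hga : g a = 1) (hg1 : ∀ t, |g t| ≤ 1)
    (hg' : ∀ t, |deriv g t| ≤ κ * √(1 - g t ^ 2))
    (hab : a ≤ b) (hb : κ * (b - a) ≤ π / 2) : cos (κ * (b - a)) ≤ g b := by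
  have h_lip : ∀ t, ‖deriv g t‖ ≤ κ := fun t => (hg' t).trans <|
    mul_le_of_le_one_right hκ (sqrt_le_one.2 (by nlinarith [sq_nonneg (g t)]))
  -- `arccos` is singular at `±1`: `-1` is avoided since `g` is `κ`-Lipschitz and `π / 2 < 2`.
  have h_gt : ∀ t ∈ Icc a b, -1 < g t := fun t ht => by
    have := (convex_univ.norm_image_sub_le_of_norm_deriv_le (fun x _ => hg x)
      (fun x _ => h_lip x) (mem_univ a) (mem_univ t))
    rw [Real.norm_eq_abs, Real.norm_eq_abs, abs_of_nonneg (sub_nonneg.2 ht.1), hga] at this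
    have : κ * (t - a) ≤ π / 2 := hb.trans' (by gcongr; exact ht.2)
    linarith [(abs_le.1 ‹|g t - 1| ≤ κ * (t - a)›).1, pi_lt_d2]
  have h_arccos : arccos (g b) - κ * (b - a) ≤ 0 := by
    refine nonpos_of_deriv_nonpos_where_pos (f := fun t => arccos (g t) - κ * (t - a)) hab
      ((continuous_arccos.comp hg.continuous).sub (by fun_prop)).continuousOn (by simp [hga])
      fun x hx hpos => ?_
    have hlt : g x < 1 := arccos_pos.1 (by nlinarith [hx.1])
    have hsqrt : 0 < √(1 - g x ^ 2) := sqrt_pos.2 (by nlinarith [h_gt x (Ioo_subset_Icc_self hx)])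
    have hd := ((hasDerivAt_arccos (h_gt x (Ioo_subset_Icc_self hx)).ne' hlt.ne).comp x
      (hg x).hasDerivAt).sub (((hasDerivAt_id x).sub_const a).const_mul κ)
    refine ⟨hd.differentiableAt, hd.deriv.trans_le ?_⟩
    rw [mul_one, sub_nonpos]
    calc -(1 / √(1 - g x ^ 2)) * deriv g x = -deriv g x / √(1 - g x ^ 2) := by ring
      _ ≤ κ := (div_le_iff₀ hsqrt).2 (by linarith [(abs_le.1 (hg' x)).1])
  calc cos (κ * (b - a)) ≤ cos (arccos (g b)) :=
        cos_le_cos_of_nonneg_of_le_pi (arccos_nonneg _) (by linarith [pi_pos]) (by linarith)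
    _ = g b := cos_arccos (abs_le.1 (hg1 b)).1 (abs_le.1 (hg1 b)).2

section InnerProductSpace

variable {E : Type*} [NormedAddCommGroup E] [InnerProductSpace ℝ E]

theorem abs_inner_le_norm_mul_sqrt_one_sub_inner_sq {a c w : E} (hc : ‖c‖ = 1) (hw : ‖w‖ = 1)
    (hac : ⟪a, c⟫ = 0) : |⟪a, w⟫| ≤ ‖a‖ * √(1 - ⟪c, w⟫ ^ 2) := by
  have h_inner : ⟪a, w⟫ = ⟪a, w - ⟪c, w⟫ • c⟫ := by
    rw [inner_sub_right, real_inner_smul_right, hac, mul_zero, sub_zero]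
  have h_norm : ‖w - ⟪c, w⟫ • c‖ = √(1 - ⟪c, w⟫ ^ 2) := by
    rw [← sqrt_sq (norm_nonneg _), norm_sub_sq_real, real_inner_smul_right, norm_smul,
      real_inner_comm, hw, hc, Real.norm_eq_abs]
    congr 1
    rw [mul_pow, sq_abs]
    ring
  rw [h_inner, ← h_norm]
  exact abs_real_inner_le_norm _ _

theorem inner_deriv_self_eq_zero_of_norm_eq {T : ℝ → E} {c t : ℝ} (hT : ∀ t, ‖T t‖ = c)
    (ht : DifferentiableAt ℝ T t) : ⟪deriv T t, T t⟫ = 0 := by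
  have h := ht.hasDerivAt.norm_sq
  simp only [hT] at h
  have := h.unique (hasDerivAt_const t (c ^ 2))
  rw [real_inner_comm] at this
  linarith

variable {T : ℝ → E} {κ u v : ℝ}

theorem cos_mul_sub_le_inner_of_le (hκ : 0 ≤ κ) (hT : Differentiable ℝ T) (hT1 : ∀ t, ‖T t‖ = 1)
    (hT' : ∀ t, ‖deriv T t‖ ≤ κ) (hvu : v ≤ u) (huv : κ * (u - v) ≤ π / 2) :
    cos (κ * (u - v)) ≤ ⟪T u, T v⟫ := by
  have hg : ∀ t, HasDerivAt (fun t => ⟪T t, T v⟫) ⟪deriv T t, T v⟫ t := fun t => by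
    simpa using (hT t).hasDerivAt.inner ℝ (hasDerivAt_const t (T v))
  refine cos_mul_sub_le_of_abs_deriv_le hκ (fun t => (hg t).differentiableAt)
    (by simp [hT1]) (fun t => ?_) (fun t => ?_) hvu huv
  · simpa [hT1] using abs_real_inner_le_norm (T t) (T v)
  · rw [(hg t).deriv]
    exact (abs_inner_le_norm_mul_sqrt_one_sub_inner_sq (hT1 t) (hT1 v)
      (inner_deriv_self_eq_zero_of_norm_eq hT1 (hT t))).trans (by gcongr; exact hT' t)

theorem cos_mul_sub_le_inner (hκ : 0 ≤ κ) (hT : Differentiable ℝ T) (hT1 : ∀ t, ‖T t‖ = 1)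
    (hT' : ∀ t, ‖deriv T t‖ ≤ κ) (huv : κ * |u - v| ≤ π / 2) :
    cos (κ * (u - v)) ≤ ⟪T u, T v⟫ := by
  rcases le_total v u with hvu | huv'
  · rw [abs_of_nonneg (sub_nonneg.2 hvu)] at huv
    exact cos_mul_sub_le_inner_of_le hκ hT hT1 hT' hvu huv
  · rw [abs_sub_comm, abs_of_nonneg (sub_nonneg.2 huv')] at huv
    rw [← cos_neg, ← mul_neg, neg_sub, real_inner_comm]
    exact cos_mul_sub_le_inner_of_le hκ hT hT1 hT' huv' huv

theorem inner_sub_eq_integral_inner_deriv {r : ℝ → E} (hr : ContDiff ℝ 1 r) (w : E) (a b : ℝ) :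
    ⟪r b - r a, w⟫ = ∫ t in a..b, ⟪deriv r t, w⟫ := by
  have hd : ∀ t, HasDerivAt (fun t => ⟪r t, w⟫) ⟪deriv r t, w⟫ t := fun t => by
    simpa using ((hr.differentiable one_ne_zero) t).hasDerivAt.inner ℝ (hasDerivAt_const t w)
  rw [intervalIntegral.integral_eq_sub_of_hasDerivAt (fun t _ => hd t)
    (((hr.continuous_deriv le_rfl).inner continuous_const).intervalIntegrable _ _), inner_sub_left]

end InnerProductSpace

theorem integral_cos_mul_sub_half {κ : ℝ} (hκ : κ ≠ 0) (s : ℝ) :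
    ∫ t in (0 : ℝ)..s, cos (κ * (t - s / 2)) = 2 / κ * sin (κ * s / 2) := by
  rw [intervalIntegral.integral_comp_sub_right (fun t => cos (κ * t)),
    intervalIntegral.integral_comp_mul_left _ hκ, integral_cos,
    show κ * (s - s / 2) = κ * s / 2 by ring, show κ * (0 - s / 2) = -(κ * s / 2) by ring,
    sin_neg, smul_eq_mul]
  field_simp
  ring

/-- A unit-speed planar curve with curvature bounded by `κ > 0` satisfies
the chord-length lower bound `‖r s − r 0‖ ≥ (2/κ) sin(κ s / 2)` for `s ∈ [0, π/κ]`. -/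
theorem stmt_5 (r : ℝ → EuclideanSpace ℝ (Fin 2)) (κ : ℝ) (hκ : 0 < κ)
    (hr : ContDiff ℝ 2 r)
    (hunit : ∀ s : ℝ, ‖deriv r s‖ = 1)
    (hcurv : ∀ s : ℝ, ‖deriv (deriv r) s‖ ≤ κ) :
    ∀ s ∈ Set.Icc (0 : ℝ) (π / κ),
      (2 / κ) * Real.sin (κ * s / 2) ≤ ‖r s - r 0‖ := by
  intro s hs
  have hT : Differentiable ℝ (deriv r) := (hr.deriv' (n := 1)).differentiable one_ne_zero
  set w := deriv r (s / 2)
  have h_tangent : ∀ t ∈ Icc 0 s, cos (κ * (t - s / 2)) ≤ ⟪deriv r t, w⟫ := fun t ht => by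
    refine cos_mul_sub_le_inner hκ.le hT hunit hcurv ?_
    have : κ * s ≤ π := (le_div_iff₀' hκ).1 hs.2
    have : |t - s / 2| ≤ s / 2 := abs_le.2 ⟨by linarith [ht.1], by linarith [ht.2]⟩
    nlinarith
  calc 2 / κ * sin (κ * s / 2) = ∫ t in (0 : ℝ)..s, cos (κ * (t - s / 2)) :=
        (integral_cos_mul_sub_half hκ.ne' s).symm
    _ ≤ ∫ t in (0 : ℝ)..s, ⟪deriv r t, w⟫ :=
        intervalIntegral.integral_mono_on hs.1
          ((by fun_prop : Continuous fun t => cos (κ * (t - s / 2))).intervalIntegrable _ _)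
          ((hT.continuous.inner continuous_const).intervalIntegrable _ _) h_tangent
    _ = ⟪r s - r 0, w⟫ := (inner_sub_eq_integral_inner_deriv (hr.of_le one_le_two) w 0 s).symm
    _ ≤ ‖r s - r 0‖ := by simpa [w, hunit] using real_inner_le_norm (r s - r 0) w
end

section
/- Let r : ℝ → ℝ² be a twice continuously differentiable planar curve parameterized by arc length (‖r′(s)‖ = 1 for all s) with curvature bounded by κ > 0 (‖r″(s)‖ ≤ κ for all s), and let d_th > 0 satisfy κ·d_th ≤ 1. If L > 0 is such that ‖r(s) − r(0)‖ < d_th for all s ∈ (0, L], then L < (1/κ)·arcsin(κ·d_th). In other words, the arc length that the curve can travel while remaining strictly inside the closed ball of radius d_th centered at its starting point is less than (1/κ)·arcsin(κ·d_th). -/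
/-!
The unit tangent `r'` moves on the unit circle with speed `‖r''‖ ≤ κ`, so it can be written as
`r'(s) = r'(0) · exp (i θ(s))` with `|θ'| ≤ κ`. Hence `⟪r'(0), r'(s)⟫ = cos θ(s) ≥ cos (κ s)` while
`κ s ≤ π`, and integrating, the displacement of `r` in the direction `r'(0)` after arc length `s`
is at least `sin (κ s) / κ`. At `s = arcsin (κ d_th) / κ` this is `d_th`.
-/

open Real Complex ComplexConjugate Module
open scoped RealInnerProductSpace

theorem Complex.eq_mul_exp_integral_of_norm_eq_one {z z' : ℝ → ℂ}
    (hz : ∀ t, HasDerivAt z (z' t) t) (hz' : Continuous z') (hnorm : ∀ t, ‖z t‖ = 1) (s : ℝ) :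
    z s = z 0 * exp ((∫ t in (0 : ℝ)..s, (z' t * conj (z t)).im) * I) := by
  set ω : ℝ → ℝ := fun t => (z' t * conj (z t)).im
  set θ : ℝ → ℝ := fun s => ∫ t in (0 : ℝ)..s, ω t
  have hcz : Continuous z := continuous_iff_continuousAt.2 fun t => (hz t).continuousAt
  have hθ : ∀ t, HasDerivAt θ (ω t) t := fun t =>
    ((continuous_im.comp (hz'.mul (continuous_conj.comp hcz))).integral_hasStrictDerivAt
      0 t).hasDerivAt
  -- `z' ⟂ z` because `‖z‖` is constant, and `conj z = z⁻¹`
  have hz'_eq : ∀ t, z' t = ω t * I * z t := by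
    intro t
    have hre : (z' t * conj (z t)).re = 0 := by
      have h := (hz t).norm_sq
      simp only [hnorm, one_pow] at h
      rw [← Complex.inner]
      linarith [h.unique (hasDerivAt_const t 1)]
    calc z' t = z' t * conj (z t) * z t := by
          rw [mul_assoc, ← normSq_eq_conj_mul_self, normSq_eq_norm_sq, hnorm]; simp
      _ = ω t * I * z t := by congr 1; apply Complex.ext <;> simp [hre, ω]
  have hw : ∀ t, HasDerivAt (fun s => z s * exp (-(θ s * I))) 0 t := by
    intro t
    refine ((hz t).mul (((hθ t).ofReal_comp.mul_const I).neg.cexp)).congr_deriv ?_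
    rw [hz'_eq]; ring
  have hconst := is_const_of_deriv_eq_zero (fun t => (hw t).differentiableAt)
    (fun t => (hw t).deriv) s 0
  simp only [θ, intervalIntegral.integral_same, ofReal_zero, zero_mul, neg_zero,
    Complex.exp_zero, mul_one] at hconst
  rw [← hconst, mul_assoc, ← Complex.exp_add]
  simp

theorem Complex.cos_mul_le_inner_of_norm_deriv_le {z z' : ℝ → ℂ}
    (hz : ∀ t, HasDerivAt z (z' t) t) (hz' : Continuous z') (hnorm : ∀ t, ‖z t‖ = 1)
    {κ : ℝ} (hκ : ∀ t, ‖z' t‖ ≤ κ) {s : ℝ} (hs : 0 ≤ s) (hκs : κ * s ≤ π) :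
    Real.cos (κ * s) ≤ ⟪z 0, z s⟫ := by
  set θ := ∫ t in (0 : ℝ)..s, (z' t * conj (z t)).im
  have hθ : |θ| ≤ κ * s := by
    have h := intervalIntegral.norm_integral_le_of_norm_le_const (a := 0) (b := s) (C := κ)
      (f := fun t => (z' t * conj (z t)).im) fun t _ => by
        calc ‖(z' t * conj (z t)).im‖ ≤ ‖z' t * conj (z t)‖ := abs_im_le_norm _
          _ = ‖z' t‖ := by rw [norm_mul, RCLike.norm_conj, hnorm, mul_one]
          _ ≤ κ := hκ t
    rw [sub_zero, Real.norm_eq_abs, abs_of_nonneg hs] at h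
    exact h
  have hinner : ⟪z 0, z s⟫ = Real.cos θ := by
    rw [Complex.inner, eq_mul_exp_integral_of_norm_eq_one hz hz' hnorm s,
      mul_right_comm, mul_conj, normSq_eq_norm_sq, hnorm, one_pow, ofReal_one, one_mul,
      exp_ofReal_mul_I_re]
  rw [hinner, ← Real.cos_abs θ]
  exact cos_le_cos_of_nonneg_of_le_pi (abs_nonneg _) hκs hθ

section TwoDim

variable {E : Type*} [NormedAddCommGroup E] [InnerProductSpace ℝ E] [Fact (finrank ℝ E = 2)]

theorem cos_mul_le_inner_of_norm_deriv_le {u u' : ℝ → E}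
    (hu : ∀ t, HasDerivAt u (u' t) t) (hu' : Continuous u') (hnorm : ∀ t, ‖u t‖ = 1)
    {κ : ℝ} (hκ : ∀ t, ‖u' t‖ ≤ κ) {s : ℝ} (hs : 0 ≤ s) (hκs : κ * s ≤ π) :
    Real.cos (κ * s) ≤ ⟪u 0, u s⟫ := by
  have := FiniteDimensional.of_fact_finrank_eq_two (K := ℝ) (V := E)
  let Φ : E ≃ₗᵢ[ℝ] ℂ := (stdOrthonormalBasis ℝ E).equiv Complex.orthonormalBasisOneI
    (finCongr Fact.out)
  have h := Complex.cos_mul_le_inner_of_norm_deriv_le (z := Φ ∘ u) (z' := Φ ∘ u')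
    (fun t => (Φ : E →L[ℝ] ℂ).hasFDerivAt.comp_hasDerivAt t (hu t)) (Φ.continuous.comp hu')
    (by simpa using hnorm) (by simpa using hκ) hs hκs
  simpa using h

theorem sin_mul_div_le_norm_sub_of_norm_deriv_le {γ γ' γ'' : ℝ → E}
    (hγ : ∀ t, HasDerivAt γ (γ' t) t) (hγ' : ∀ t, HasDerivAt γ' (γ'' t) t)
    (hγ'' : Continuous γ'') (hunit : ∀ t, ‖γ' t‖ = 1) {κ : ℝ} (hκ : 0 < κ)
    (hcurv : ∀ t, ‖γ'' t‖ ≤ κ) {s : ℝ} (hs : 0 ≤ s) (hκs : κ * s ≤ π) :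
    Real.sin (κ * s) / κ ≤ ‖γ s - γ 0‖ := by
  have hcγ' : Continuous γ' := continuous_iff_continuousAt.2 fun t => (hγ' t).continuousAt
  have hint : ∫ t in (0 : ℝ)..s, ⟪γ' 0, γ' t⟫ = ⟪γ' 0, γ s - γ 0⟫ := by
    rw [inner_sub_right]
    exact intervalIntegral.integral_eq_sub_of_hasDerivAt
      (fun t _ => (hasDerivAt_const t (γ' 0)).inner ℝ (hγ t) |>.congr_deriv (by simp))
      ((continuous_const.inner hcγ').intervalIntegrable 0 s)
  calc Real.sin (κ * s) / κ = ∫ t in (0 : ℝ)..s, Real.cos (κ * t) := by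
        rw [intervalIntegral.integral_comp_mul_left Real.cos hκ.ne', integral_cos, mul_zero,
          Real.sin_zero, sub_zero, smul_eq_mul, inv_mul_eq_div]
    _ ≤ ∫ t in (0 : ℝ)..s, ⟪γ' 0, γ' t⟫ := by
        refine intervalIntegral.integral_mono_on hs
          ((by fun_prop : Continuous fun t => Real.cos (κ * t)).intervalIntegrable 0 s)
          ((continuous_const.inner hcγ').intervalIntegrable 0 s) fun t ht => ?_
        exact cos_mul_le_inner_of_norm_deriv_le hγ' hγ'' hunit hcurv ht.1
          ((mul_le_mul_of_nonneg_left ht.2 hκ.le).trans hκs)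
    _ = ⟪γ' 0, γ s - γ 0⟫ := hint
    _ ≤ ‖γ' 0‖ * ‖γ s - γ 0‖ := real_inner_le_norm _ _
    _ = ‖γ s - γ 0‖ := by rw [hunit, one_mul]

end TwoDim

theorem stmt_6_general (r : ℝ → EuclideanSpace ℝ (Fin 2)) (κ : ℝ) (hκ : 0 < κ)
    (hr : ContDiff ℝ 2 r)
    (hunit : ∀ s : ℝ, ‖deriv r s‖ = 1)
    (hcurv : ∀ s : ℝ, ‖deriv (deriv r) s‖ ≤ κ)
    (dth : ℝ) (hdth : 0 < dth) (hκdth : κ * dth ≤ 1)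
    (L : ℝ)
    (hin : ∀ s ∈ Set.Ioc (0 : ℝ) L, ‖r s - r 0‖ < dth) :
    L < (1 / κ) * Real.arcsin (κ * dth) := by
  have hr' : ContDiff ℝ 1 (deriv r) := (contDiff_succ_iff_deriv (n := 1).1 hr).2.2
  have : Fact (finrank ℝ (EuclideanSpace ℝ (Fin 2)) = 2) := ⟨finrank_euclideanSpace_fin⟩
  set s₀ := 1 / κ * Real.arcsin (κ * dth) with hs₀_def
  have hκs₀ : κ * s₀ = Real.arcsin (κ * dth) := by rw [hs₀_def]; field_simp
  have hs₀ : 0 < s₀ := mul_pos (by positivity) (Real.arcsin_pos.2 (mul_pos hκ hdth))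
  by_contra! hLs₀
  have hchord := sin_mul_div_le_norm_sub_of_norm_deriv_le
    (fun s => (hr.differentiable (by norm_num) s).hasDerivAt)
    (fun s => (hr'.differentiable one_ne_zero s).hasDerivAt) (hr'.continuous_deriv le_rfl)
    hunit hκ hcurv hs₀.le (by linarith [Real.arcsin_le_pi_div_two (κ * dth), pi_pos])
  rw [hκs₀, Real.sin_arcsin (by linarith [mul_pos hκ hdth]) hκdth, mul_div_cancel_left₀ _ hκ.ne']
    at hchord
  exact (hin s₀ ⟨hs₀, hLs₀⟩).not_ge hchord

/-- A unit-speed planar curve with curvature bounded by `κ > 0`, where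
`κ d_th ≤ 1`, can remain strictly inside the closed ball of radius `d_th` around its
starting point only for arc length less than `(1/κ) arcsin(κ d_th)`. -/
theorem stmt_6 (r : ℝ → EuclideanSpace ℝ (Fin 2)) (κ : ℝ) (hκ : 0 < κ)
    (hr : ContDiff ℝ 2 r)
    (hunit : ∀ s : ℝ, ‖deriv r s‖ = 1)
    (hcurv : ∀ s : ℝ, ‖deriv (deriv r) s‖ ≤ κ)
    (dth : ℝ) (hdth : 0 < dth) (hκdth : κ * dth ≤ 1)
    (L : ℝ) (hL : 0 < L)
    (hin : ∀ s ∈ Set.Ioc (0 : ℝ) L, ‖r s - r 0‖ < dth) :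
    L < (1 / κ) * Real.arcsin (κ * dth) :=
  stmt_6_general r κ hκ hr hunit hcurv dth hdth hκdth L hin
end

section
/- Let r : ℝ → ℝ², r(s) = (x(s), y(s)), be a twice continuously differentiable planar curve parameterized by arc length (‖r′(s)‖ = 1 for all s) with curvature bounded by κ > 0 (‖r″(s)‖ ≤ κ for all s), and suppose r(0) = (0,0) and r′(0) = (−1, 0). Then for every s ∈ [0, π/(2κ)], the lateral deviation satisfies |y(s)| ≤ (1 − cos(κ s))/κ; that is, the curve is confined between the two circular arcs of curvature κ tangent to the x-axis at the origin. -/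
/-!
Identify the plane with `ℂ`. The unit tangent `u` satisfies `u' = i ω u` with angular velocity
`ω = Im (u' ū)`, `|ω| ≤ |u'| ≤ κ`; hence `u t = u 0 · exp (i θ t)` with `θ t = ∫₀ᵗ ω` and
`|θ t| ≤ κ t`. As `u 0 = ±1`, `|Im u t| = |sin θ t| ≤ sin (κ t)` as long as `κ t ≤ π / 2`, and
integrating, `|y s| ≤ ∫₀ˢ sin (κ t) dt = (1 - cos (κ s)) / κ`.
-/

open Real Set intervalIntegral ComplexConjugate

noncomputable def angularVelocity (u u' : ℝ → ℂ) (t : ℝ) : ℝ :=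
  (u' t * conj (u t)).im

section UnitSpeedCurve

variable {u u' : ℝ → ℂ}

theorem re_mul_conj_eq_zero_of_norm_eq_one (hu : ∀ t, HasDerivAt u (u' t) t)
    (hnorm : ∀ t, ‖u t‖ = 1) (t : ℝ) : (u' t * conj (u t)).re = 0 := by
  have h := (hu t).norm_sq
  simp only [hnorm, one_pow] at h
  have := h.unique (hasDerivAt_const t 1)
  rw [Complex.inner] at this
  linarith

theorem eq_angularVelocity_mul_I_mul (hu : ∀ t, HasDerivAt u (u' t) t)
    (hnorm : ∀ t, ‖u t‖ = 1) (t : ℝ) :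
    u' t = angularVelocity u u' t * Complex.I * u t := by
  have hunit : conj (u t) * u t = 1 := by simp [Complex.conj_mul', hnorm]
  calc u' t = u' t * conj (u t) * u t := by rw [mul_assoc, hunit, mul_one]
    _ = _ := by
      conv_lhs => rw [← Complex.re_add_im (u' t * conj (u t)),
        re_mul_conj_eq_zero_of_norm_eq_one hu hnorm t]
      simp [angularVelocity]

theorem eq_mul_exp_integral_angularVelocity (hu : ∀ t, HasDerivAt u (u' t) t)
    (hu' : Continuous u') (hnorm : ∀ t, ‖u t‖ = 1) (t : ℝ) :
    u t = u 0 * Complex.exp ((∫ τ in 0..t, angularVelocity u u' τ) * Complex.I) := by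
  set ω := angularVelocity u u'
  have hu_cont : Continuous u := continuous_iff_continuousAt.2 fun τ => (hu τ).continuousAt
  have hω : Continuous ω :=
    Complex.continuous_im.comp (hu'.mul (Complex.continuous_conj.comp hu_cont))
  set θ : ℝ → ℝ := fun t => ∫ τ in 0..t, ω τ
  have hθ : ∀ t, HasDerivAt θ (ω t) t := fun t =>
    integral_hasDerivAt_right (hω.intervalIntegrable 0 t) (hω.stronglyMeasurableAtFilter _ _)
      hω.continuousAt
  have hconst : ∀ t, HasDerivAt (fun t => u t * Complex.exp (-θ t * Complex.I)) 0 t := by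
    intro t
    refine ((hu t).mul ((hθ t).ofReal_comp.neg.mul_const Complex.I).cexp).congr_deriv ?_
    rw [eq_angularVelocity_mul_I_mul hu hnorm t]
    simp only [Pi.neg_apply]
    ring
  have := is_const_of_deriv_eq_zero (fun t => (hconst t).differentiableAt)
    (fun t => (hconst t).deriv) t 0
  simp only [θ, integral_same, Complex.ofReal_zero, neg_zero, zero_mul, Complex.exp_zero,
    mul_one] at this
  rw [← this, mul_assoc, ← Complex.exp_add]
  simp

theorem abs_im_le_sin_mul {κ t : ℝ} (hu : ∀ t, HasDerivAt u (u' t) t) (hu' : Continuous u')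
    (hnorm : ∀ t, ‖u t‖ = 1) (hcurv : ∀ t, ‖u' t‖ ≤ κ) (hu0 : (u 0).im = 0) (ht : 0 ≤ t)
    (hκt : κ * t ≤ π / 2) : |(u t).im| ≤ sin (κ * t) := by
  set θ := ∫ τ in 0..t, angularVelocity u u' τ
  have hθ : |θ| ≤ κ * t := by
    have := norm_integral_le_of_norm_le_const (a := 0) (b := t) (C := κ)
      (f := angularVelocity u u') fun τ _ => ?_
    · rwa [Real.norm_eq_abs, sub_zero, abs_of_nonneg ht] at this
    · calc ‖angularVelocity u u' τ‖ ≤ ‖u' τ * conj (u τ)‖ := Complex.abs_im_le_norm _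
        _ = ‖u' τ‖ := by simp [hnorm]
        _ ≤ κ := hcurv τ
  have him : (u t).im = (u 0).re * sin θ := by
    rw [eq_mul_exp_integral_angularVelocity hu hu' hnorm t, Complex.mul_im, hu0,
      Complex.exp_ofReal_mul_I_im, zero_mul, add_zero]
  have hre : |(u 0).re| = 1 := by rw [Complex.abs_re_eq_norm.2 hu0, hnorm]
  rw [him, abs_mul, hre, one_mul, abs_sin_eq_sin_abs_of_abs_le_pi (by linarith [pi_pos])]
  exact sin_le_sin_of_le_of_le_pi_div_two (by linarith [abs_nonneg θ, pi_pos]) hκt hθ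

end UnitSpeedCurve

theorem integral_sin_mul {κ : ℝ} (hκ : κ ≠ 0) (s : ℝ) :
    ∫ t in 0..s, sin (κ * t) = (1 - cos (κ * s)) / κ := by
  rw [integral_comp_mul_left (fun t => sin t) hκ, integral_sin]
  simp [div_eq_inv_mul]

theorem abs_im_le_one_sub_cos_div {c u u' : ℝ → ℂ} {κ s : ℝ} (hκ : 0 < κ)
    (hc : ∀ t, HasDerivAt c (u t) t) (hu : ∀ t, HasDerivAt u (u' t) t) (hu' : Continuous u')
    (hnorm : ∀ t, ‖u t‖ = 1) (hcurv : ∀ t, ‖u' t‖ ≤ κ) (hc0 : (c 0).im = 0)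
    (hu0 : (u 0).im = 0) (hs : s ∈ Icc 0 (π / (2 * κ))) :
    |(c s).im| ≤ (1 - cos (κ * s)) / κ := by
  have hu_cont : Continuous u := continuous_iff_continuousAt.2 fun t => (hu t).continuousAt
  have him : (c s).im = ∫ t in 0..s, (u t).im := by
    rw [integral_eq_sub_of_hasDerivAt (f := fun t => (c t).im) (f' := fun t => (u t).im)
      (fun t _ => Complex.imCLM.hasFDerivAt.comp_hasDerivAt t (hc t))
      ((Complex.continuous_im.comp hu_cont).intervalIntegrable 0 s), hc0, sub_zero]
  rw [him, ← integral_sin_mul hκ.ne' s, ← Real.norm_eq_abs]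
  refine norm_integral_le_of_norm_le hs.1 (MeasureTheory.ae_of_all _ fun t ht =>
    abs_im_le_sin_mul hu hu' hnorm hcurv hu0 ht.1.le ?_)
    ((continuous_sin.comp (continuous_const_mul κ)).intervalIntegrable 0 s)
  have := ht.2.trans hs.2
  rw [le_div_iff₀ (by positivity)] at this
  linarith

theorem stmt_7_general (r : ℝ → EuclideanSpace ℝ (Fin 2)) (κ : ℝ) (hκ : 0 < κ)
    (hr : ContDiff ℝ 2 r)
    (hunit : ∀ s : ℝ, ‖deriv r s‖ = 1)
    (hcurv : ∀ s : ℝ, ‖deriv (deriv r) s‖ ≤ κ)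
    (hstart : r 0 = 0)
    (htangent1 : deriv r 0 1 = 0) :
    ∀ s ∈ Set.Icc (0 : ℝ) (π / (2 * κ)),
      |r s 1| ≤ (1 - Real.cos (κ * s)) / κ := by
  intro s hs
  -- `e x = x 0 + x 1 * I`
  set e := Complex.orthonormalBasisOneI.repr.symm
  have hr' : ContDiff ℝ 1 (deriv r) := ((contDiff_succ_iff_deriv (n := 1)).1 hr).2.2
  have := abs_im_le_one_sub_cos_div (c := e ∘ r) (u := e ∘ deriv r)
    (u' := e ∘ deriv (deriv r)) hκ
    (fun t => e.hasFDerivAt.comp_hasDerivAt t ((hr.differentiable (by norm_num)) t).hasDerivAt)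
    (fun t => e.hasFDerivAt.comp_hasDerivAt t ((hr'.differentiable one_ne_zero) t).hasDerivAt)
    (e.continuous.comp (hr'.continuous_deriv le_rfl)) (fun t => by simp [hunit])
    (fun t => by simpa using hcurv t) (by simp [e, hstart]) (by simp [e, htangent1]) hs
  simpa [e] using this

/-- A unit-speed planar curve with curvature bounded by `κ > 0`, starting
at the origin with initial tangent `(−1, 0)`, has lateral deviation
`|y(s)| ≤ (1 − cos(κ s))/κ` for `s ∈ [0, π/(2κ)]`. -/
theorem stmt_7 (r : ℝ → EuclideanSpace ℝ (Fin 2)) (κ : ℝ) (hκ : 0 < κ)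
    (hr : ContDiff ℝ 2 r)
    (hunit : ∀ s : ℝ, ‖deriv r s‖ = 1)
    (hcurv : ∀ s : ℝ, ‖deriv (deriv r) s‖ ≤ κ)
    (hstart : r 0 = 0)
    (htangent0 : deriv r 0 0 = -1) (htangent1 : deriv r 0 1 = 0) :
    ∀ s ∈ Set.Icc (0 : ℝ) (π / (2 * κ)),
      |r s 1| ≤ (1 - Real.cos (κ * s)) / κ :=
  stmt_7_general r κ hκ hr hunit hcurv hstart htangent1
end

section
/- Let r : ℝ → ℝ² be a twice continuously differentiable planar curve parameterized by arc length (‖r′(s)‖ = 1 for all s) with curvature bounded by κ > 0 (‖r″(s)‖ ≤ κ for all s). Then for all s, t ∈ ℝ with κ·|s − t| ≤ π, the unit tangent vectors satisfy ⟨r′(s), r′(t)⟩ ≥ cos(κ·|s − t|), i.e., the angle between the tangent directions at arc-length parameters s and t is at most κ·|s − t|. -/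
/-!
Fix `s` and put `f u = ⟪r' s, r' u⟫`. Differentiating `‖r'‖ = 1` gives `r'' ⊥ r'`, so only the
component of `r' s` orthogonal to `r' u` pairs with `r'' u`; that component has length
`√(1 - f u ²)`, whence `|f'| ≤ κ √(1 - f²)`. Thus the angle `arccos ∘ f` between the tangents
grows at rate at most `κ`, and `cos` is decreasing on `[0, π]`.
-/

open Real Filter Set Topology
open scoped RealInnerProductSpace

theorem inner_eq_zero_of_hasDerivAt_of_norm_eq {F : Type*} [NormedAddCommGroup F]
    [InnerProductSpace ℝ F] {f : ℝ → F} {f' : F} {x c : ℝ} (hf : HasDerivAt f f' x)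
    (hc : ∀ u, ‖f u‖ = c) : ⟪f x, f'⟫ = 0 := by
  have hconst : HasDerivAt (‖f ·‖ ^ 2) 0 x := by
    simpa only [hc] using hasDerivAt_const x (c ^ 2)
  simpa using hf.norm_sq.unique hconst

theorem abs_inner_le_norm_mul_sqrt_of_inner_eq_zero {F : Type*} [NormedAddCommGroup F]
    [InnerProductSpace ℝ F] {v w z : F} (hw : ‖w‖ = 1) (hwz : ⟪w, z⟫ = 0) :
    |⟪v, z⟫| ≤ ‖z‖ * √(‖v‖ ^ 2 - ⟪v, w⟫ ^ 2) := by
  have hinner : ⟪v - ⟪v, w⟫ • w, z⟫ = ⟪v, z⟫ := by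
    rw [inner_sub_left, real_inner_smul_left, hwz, mul_zero, sub_zero]
  have hnorm : ‖v - ⟪v, w⟫ • w‖ = √(‖v‖ ^ 2 - ⟪v, w⟫ ^ 2) := by
    rw [← sqrt_sq (norm_nonneg _), norm_sub_sq_real, real_inner_smul_right, norm_smul,
      hw, norm_eq_abs, mul_one, sq_abs]
    ring_nf
  calc |⟪v, z⟫| = |⟪v - ⟪v, w⟫ • w, z⟫| := by rw [hinner]
    _ ≤ ‖v - ⟪v, w⟫ • w‖ * ‖z‖ := abs_real_inner_le_norm _ _
    _ = ‖z‖ * √(‖v‖ ^ 2 - ⟪v, w⟫ ^ 2) := by rw [hnorm, mul_comm]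

theorem mul_sqrt_one_sub_sq_le {c x : ℝ} (hc0 : 0 ≤ c) (hc1 : c ≤ 1) :
    c * √(1 - x ^ 2) ≤ √(1 - (c * x) ^ 2) := by
  rw [← sqrt_sq hc0, ← sqrt_mul (sq_nonneg c), sqrt_sq hc0]
  apply sqrt_le_sqrt
  nlinarith [sq_nonneg x, mul_le_one₀ hc1 hc0 hc1]

section arccos

variable {f f' : ℝ → ℝ} {κ : ℝ}

/-- `c < 1` keeps `c * f` away from `±1`, where `arccos` is not differentiable. -/
theorem abs_arccos_const_mul_sub_le (hκ : 0 ≤ κ) {c : ℝ} (hc0 : 0 ≤ c) (hc1 : c < 1)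
    (hf : ∀ u, HasDerivAt f (f' u) u) (hf1 : ∀ u, |f u| ≤ 1)
    (hf' : ∀ u, |f' u| ≤ κ * √(1 - f u ^ 2)) (s t : ℝ) :
    |arccos (c * f t) - arccos (c * f s)| ≤ κ * |t - s| := by
  have hcf : ∀ u, |c * f u| < 1 := fun u => by
    rw [abs_mul, abs_of_nonneg hc0]
    nlinarith [hf1 u, abs_nonneg (f u)]
  have hsqrt_pos : ∀ u, 0 < √(1 - (c * f u) ^ 2) := fun u => by
    have := sq_lt_one_iff_abs_lt_one _ |>.mpr (hcf u)
    exact sqrt_pos.mpr (by linarith)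
  have hderiv : ∀ u, HasDerivAt (fun u => arccos (c * f u))
      (-(1 / √(1 - (c * f u) ^ 2)) * (c * f' u)) u := fun u =>
    (hasDerivAt_arccos (abs_lt.mp (hcf u)).1.ne' (abs_lt.mp (hcf u)).2.ne).comp (h₂ := arccos) u
      ((hf u).const_mul c)
  have hbound : ∀ u, ‖-(1 / √(1 - (c * f u) ^ 2)) * (c * f' u)‖ ≤ κ := fun u => by
    rw [norm_eq_abs, abs_mul, abs_neg, abs_of_pos (one_div_pos.mpr (hsqrt_pos u)), abs_mul,
      abs_of_nonneg hc0, one_div_mul_eq_div, div_le_iff₀ (hsqrt_pos u)]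
    calc c * |f' u| ≤ c * (κ * √(1 - f u ^ 2)) := by gcongr; exact hf' u
      _ = κ * (c * √(1 - f u ^ 2)) := by ring
      _ ≤ κ * √(1 - (c * f u) ^ 2) := by gcongr; exact mul_sqrt_one_sub_sq_le hc0 hc1.le
  simpa only [norm_eq_abs] using convex_univ.norm_image_sub_le_of_norm_hasDerivWithin_le
    (fun u _ => (hderiv u).hasDerivWithinAt) (fun u _ => hbound u) (mem_univ s) (mem_univ t)

theorem abs_arccos_sub_le (hκ : 0 ≤ κ) (hf : ∀ u, HasDerivAt f (f' u) u)
    (hf1 : ∀ u, |f u| ≤ 1) (hf' : ∀ u, |f' u| ≤ κ * √(1 - f u ^ 2)) (s t : ℝ) :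
    |arccos (f t) - arccos (f s)| ≤ κ * |t - s| := by
  have hlim : Tendsto (fun c => |arccos (c * f t) - arccos (c * f s)|) (𝓝[<] 1)
      (𝓝 |arccos (1 * f t) - arccos (1 * f s)|) :=
    (Continuous.tendsto (by fun_prop) 1).mono_left nhdsWithin_le_nhds
  simp only [one_mul] at hlim
  refine le_of_tendsto hlim ?_
  filter_upwards [Ioo_mem_nhdsLT zero_lt_one] with c hc
  exact abs_arccos_const_mul_sub_le hκ hc.1.le hc.2 hf hf1 hf' s t

end arccos

theorem stmt_8_general (r : ℝ → EuclideanSpace ℝ (Fin 2)) (κ : ℝ)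
    (hr : ContDiff ℝ 2 r)
    (hunit : ∀ s : ℝ, ‖deriv r s‖ = 1)
    (hcurv : ∀ s : ℝ, ‖deriv (deriv r) s‖ ≤ κ) :
    ∀ s t : ℝ, κ * |s - t| ≤ π →
      Real.cos (κ * |s - t|) ≤ ⟪deriv r s, deriv r t⟫ := by
  intro s t hst
  have hr' : ∀ u, HasDerivAt (deriv r) (deriv (deriv r) u) u := fun u =>
    (hr.differentiable_deriv_two u).hasDerivAt
  have hf : ∀ u,
      HasDerivAt (fun u => ⟪deriv r s, deriv r u⟫) ⟪deriv r s, deriv (deriv r) u⟫ u := fun u => by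
    simpa using (hasDerivAt_const u (deriv r s)).inner ℝ (hr' u)
  have hf1 : ∀ u, |⟪deriv r s, deriv r u⟫| ≤ 1 := fun u => by
    simpa [hunit] using abs_real_inner_le_norm (deriv r s) (deriv r u)
  have hf' : ∀ u, |⟪deriv r s, deriv (deriv r) u⟫| ≤ κ * √(1 - ⟪deriv r s, deriv r u⟫ ^ 2) :=
    fun u => by
      have h := abs_inner_le_norm_mul_sqrt_of_inner_eq_zero (v := deriv r s) (hunit u)
        (inner_eq_zero_of_hasDerivAt_of_norm_eq (hr' u) hunit)
      rw [hunit, one_pow] at h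
      exact h.trans (mul_le_mul_of_nonneg_right (hcurv u) (sqrt_nonneg _))
  have harccos := abs_arccos_sub_le ((norm_nonneg _).trans (hcurv s)) hf hf1 hf' s t
  rw [real_inner_self_eq_norm_sq, hunit, one_pow, arccos_one, sub_zero, abs_sub_comm t,
    abs_of_nonneg (arccos_nonneg _)] at harccos
  calc cos (κ * |s - t|) ≤ cos (arccos ⟪deriv r s, deriv r t⟫) :=
        cos_le_cos_of_nonneg_of_le_pi (arccos_nonneg _) hst harccos
    _ = ⟪deriv r s, deriv r t⟫ := cos_arccos (abs_le.mp (hf1 t)).1 (abs_le.mp (hf1 t)).2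

/-- For a unit-speed planar curve with curvature bounded by `κ > 0`, the
unit tangent vectors at parameters `s` and `t` with `κ|s − t| ≤ π` satisfy
`⟪r′(s), r′(t)⟫ ≥ cos(κ|s − t|)`. -/
theorem stmt_8 (r : ℝ → EuclideanSpace ℝ (Fin 2)) (κ : ℝ) (hκ : 0 < κ)
    (hr : ContDiff ℝ 2 r)
    (hunit : ∀ s : ℝ, ‖deriv r s‖ = 1)
    (hcurv : ∀ s : ℝ, ‖deriv (deriv r) s‖ ≤ κ) :
    ∀ s t : ℝ, κ * |s - t| ≤ π →
      Real.cos (κ * |s - t|) ≤ ⟪deriv r s, deriv r t⟫ :=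
  stmt_8_general r κ hr hunit hcurv
end

section
/- Let r : ℝ → ℝ² be a twice continuously differentiable planar curve parameterized by arc length (‖r′(s)‖ = 1 for all s) with curvature bounded by κ > 0 (‖r″(s)‖ ≤ κ for all s), and let d_th > 0 satisfy κ·d_th < 1. Then the curve cannot loop while inside a ball of radius d_th: for every s ∈ ℝ and every d ≥ 0 such that ‖r(s − d′) − r(s)‖ ≤ d_th for all d′ ∈ [0, d], one has ⟨r′(s − d), r′(s)⟩ > 0, i.e., as long as the backward-traced portion of the curve has remained inside the closed ball of radius d_th centered at r(s), its tangent direction never acquires a component opposite to the tangent direction at r(s). -/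
/-!
The unit tangent `T = r'` runs along the unit circle with speed at most `κ`. Lifting it to an
angle function shows that the angle between `T (s - u)` and `T s` is at most `κ u`, so
`⟪T (s - u), T s⟫ ≥ cos (κ u)` as long as `κ u ≤ π`. If `⟪T (s - d), T s⟫ ≤ 0`, this forces
`d ≥ π / (2κ)`; integrating the same bound over `[s - π / (2κ), s]` shows that the curve has moved
at least `∫₀^{π/(2κ)} cos (κ u) du = 1 / κ > d_th` in the direction `T s`, leaving the ball.
-/

open Real
open scoped RealInnerProductSpace

theorem inner_eq_zero_of_hasDerivAt_of_norm_eq_s9 {F : Type*} [NormedAddCommGroup F]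
    [InnerProductSpace ℝ F] {u : ℝ → F} {u' : F} {t c : ℝ} (hu : HasDerivAt u u' t)
    (hnorm : ∀ t, ‖u t‖ = c) : ⟪u t, u'⟫ = 0 := by
  have hconst : HasDerivAt (‖u ·‖ ^ 2) 0 t := by
    simpa only [hnorm] using hasDerivAt_const t (c ^ 2)
  linarith [hu.norm_sq.unique hconst]

open Complex ComplexConjugate in
theorem Complex.exists_lift_of_norm_deriv_le {z : ℝ → ℂ} {κ : ℝ} (hz : ContDiff ℝ 1 z)
    (hnorm : ∀ t, ‖z t‖ = 1) (hz0 : z 0 = 1) (hκ : ∀ t, ‖deriv z t‖ ≤ κ) :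
    ∃ θ : ℝ → ℝ, (∀ t, z t = exp (θ t * I)) ∧ ∀ t, |θ t| ≤ κ * |t| := by
  obtain ⟨hzd, hz'c⟩ := contDiff_one_iff_deriv.mp hz
  set ω : ℝ → ℝ := fun t => (deriv z t * conj (z t)).im
  have hωc : Continuous ω := by fun_prop
  set θ : ℝ → ℝ := fun t => ∫ u in (0 : ℝ)..t, ω u
  have hθ : ∀ t, HasDerivAt θ (ω t) t := fun t =>
    (hωc.integral_hasStrictDerivAt 0 t).hasDerivAt
  -- `z` moves orthogonally to itself, so its velocity is `z` turned by a right angle.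
  have hrot : ∀ t, deriv z t = ω t * I * z t := by
    intro t
    have hre : (deriv z t * conj (z t)).re = 0 := by
      rw [← Complex.inner]
      exact inner_eq_zero_of_hasDerivAt_of_norm_eq_s9 (hzd t).hasDerivAt hnorm
    have hz_conj : conj (z t) * z t = 1 := by
      rw [← Complex.normSq_eq_conj_mul_self, Complex.normSq_eq_norm_sq, hnorm]; norm_num
    calc deriv z t = deriv z t * conj (z t) * z t := by rw [mul_assoc, hz_conj, mul_one]
      _ = ω t * I * z t := by
        congr 1; apply Complex.ext <;> simp [hre, ω]
  have hunwind : ∀ t, z t * exp (-(θ t * I)) = 1 := by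
    have hderiv : ∀ t, HasDerivAt (fun t => z t * exp (-(θ t * I))) 0 t := by
      intro t
      refine ((hzd t).hasDerivAt.mul ((hθ t).ofReal_comp.mul_const I).neg.cexp).congr_deriv ?_
      rw [hrot]; ring
    intro t
    rw [is_const_of_deriv_eq_zero (fun t => (hderiv t).differentiableAt)
      (fun t => (hderiv t).deriv) t 0]
    simp [θ, hz0]
  refine ⟨θ, fun t => ?_, fun t => ?_⟩
  · rw [← mul_one (exp _), ← hunwind t, mul_left_comm, ← Complex.exp_add, add_neg_cancel,
      Complex.exp_zero, mul_one]
  · have hω : ∀ u ∈ Set.uIoc (0 : ℝ) t, ‖ω u‖ ≤ κ := fun u _ => by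
      calc ‖ω u‖ ≤ ‖deriv z u * conj (z u)‖ := Complex.abs_im_le_norm _
        _ ≤ κ := by rw [norm_mul, Complex.norm_conj, hnorm, mul_one]; exact hκ u
    simpa using intervalIntegral.norm_integral_le_of_norm_le_const hω

theorem Complex.cos_le_re_of_norm_deriv_le {z : ℝ → ℂ} {κ : ℝ} (hz : ContDiff ℝ 1 z)
    (hnorm : ∀ t, ‖z t‖ = 1) (hz0 : z 0 = 1) (hκ : ∀ t, ‖deriv z t‖ ≤ κ) {t : ℝ}
    (ht : κ * |t| ≤ π) : Real.cos (κ * t) ≤ (z t).re := by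
  obtain ⟨θ, hθz, hθ⟩ := Complex.exists_lift_of_norm_deriv_le hz hnorm hz0 hκ
  have hκ0 : 0 ≤ κ := (norm_nonneg _).trans (hκ 0)
  rw [hθz, Complex.exp_ofReal_mul_I_re, ← cos_abs (κ * t), ← cos_abs (θ t), abs_mul,
    abs_of_nonneg hκ0]
  exact cos_le_cos_of_nonneg_of_le_pi (abs_nonneg _) ht (hθ t)

section TwoDim

variable {E : Type*} [NormedAddCommGroup E] [InnerProductSpace ℝ E] [Fact (Module.finrank ℝ E = 2)]

attribute [local instance] FiniteDimensional.of_fact_finrank_eq_two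

theorem cos_le_inner_of_norm_deriv_le {T : ℝ → E} {κ : ℝ} (hT : ContDiff ℝ 1 T)
    (hunit : ∀ t, ‖T t‖ = 1) (hκ : ∀ t, ‖deriv T t‖ ≤ κ) {t t₀ : ℝ}
    (ht : κ * |t - t₀| ≤ π) : cos (κ * (t - t₀)) ≤ ⟪T t, T t₀⟫ := by
  let o : Orientation ℝ E (Fin 2) := (Module.finBasisOfFinrankEq ℝ E Fact.out).orientation
  -- `kahler (T t₀)` is an isometry onto `ℂ` sending `T t₀` to `1`; its real part is `⟪T t₀, ·⟫`.
  let K : E →L[ℝ] ℂ := LinearMap.toContinuousLinearMap (o.kahler (T t₀))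
  have hshift : ContDiff ℝ 1 fun u => T (u + t₀) := hT.comp (contDiff_id.add contDiff_const)
  have hderiv : ∀ u, deriv (fun u => K (T (u + t₀))) u = K (deriv T (u + t₀)) := fun u =>
    (K.hasFDerivAt.comp_hasDerivAt u
      (((hT.differentiable one_ne_zero) (u + t₀)).hasDerivAt.comp_add_const u t₀)).deriv
  have := Complex.cos_le_re_of_norm_deriv_le (z := fun u => K (T (u + t₀))) (t := t - t₀)
    (K.contDiff.comp hshift) (fun u => by simp [K, o.norm_kahler, hunit])
    (by simp [K, o.kahler_apply_self, hunit]) (fun u => ?_) ht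
  · simpa [K, o.kahler_apply_apply, real_inner_comm] using this
  · rw [hderiv]
    simpa [K, o.norm_kahler, hunit] using hκ (u + t₀)

theorem sin_div_le_inner_sub_of_norm_deriv_le {r : ℝ → E} {κ : ℝ} (hr : ContDiff ℝ 2 r)
    (hunit : ∀ t, ‖deriv r t‖ = 1) (hκ : ∀ t, ‖deriv (deriv r) t‖ ≤ κ) (hκ0 : 0 < κ)
    {t₀ t : ℝ} (ht : 0 ≤ t) (htπ : κ * t ≤ π) :
    sin (κ * t) / κ ≤ ⟪r t₀ - r (t₀ - t), deriv r t₀⟫ := by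
  obtain ⟨hrd, -, hT⟩ := contDiff_succ_iff_deriv.mp (show ContDiff ℝ (1 + 1) r from hr)
  have hcos : ∫ u in (t₀ - t)..t₀, cos (κ * (u - t₀)) = sin (κ * t) / κ := by
    simp only [intervalIntegral.integral_comp_sub_right (fun u => cos (κ * u)),
      sub_sub_cancel_left, sub_self, intervalIntegral.integral_comp_mul_left _ hκ0.ne', mul_neg,
      mul_zero, integral_cos, sin_zero, sin_neg, sub_neg_eq_add, zero_add, smul_eq_mul]
    field_simp
  have hinner :
      ∫ u in (t₀ - t)..t₀, ⟪deriv r u, deriv r t₀⟫ = ⟪r t₀ - r (t₀ - t), deriv r t₀⟫ := by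
    rw [inner_sub_left]
    refine intervalIntegral.integral_eq_sub_of_hasDerivAt (f := fun u => ⟪r u, deriv r t₀⟫)
      (fun u _ => ?_) ?_
    · exact ((hrd u).hasDerivAt.inner ℝ (hasDerivAt_const u (deriv r t₀))).congr_deriv (by simp)
    · exact (hT.continuous.inner continuous_const).intervalIntegrable _ _
  rw [← hcos, ← hinner]
  refine intervalIntegral.integral_mono_on (by linarith)
    ((by fun_prop : Continuous fun u => cos (κ * (u - t₀))).intervalIntegrable _ _)
    ((hT.continuous.inner continuous_const).intervalIntegrable _ _) fun u hu => ?_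
  refine cos_le_inner_of_norm_deriv_le hT hunit hκ ?_
  rw [abs_of_nonpos (by linarith [hu.2])]
  nlinarith [hu.1]

end TwoDim

theorem stmt_9_general (r : ℝ → EuclideanSpace ℝ (Fin 2)) (κ : ℝ) (hκ : 0 < κ)
    (hr : ContDiff ℝ 2 r)
    (hunit : ∀ s : ℝ, ‖deriv r s‖ = 1)
    (hcurv : ∀ s : ℝ, ‖deriv (deriv r) s‖ ≤ κ)
    (dth : ℝ) (hκdth : κ * dth < 1) :
    ∀ s : ℝ, ∀ d : ℝ, 0 ≤ d →
      (∀ d' ∈ Set.Icc (0 : ℝ) d, ‖r (s - d') - r s‖ ≤ dth) →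
      0 < ⟪deriv r (s - d), deriv r s⟫ := by
  intro s d hd hball
  have : Fact (Module.finrank ℝ (EuclideanSpace ℝ (Fin 2)) = 2) := ⟨finrank_euclideanSpace_fin⟩
  have hT : ContDiff ℝ 1 (deriv r) :=
    (contDiff_succ_iff_deriv.mp (show ContDiff ℝ (1 + 1) r from hr)).2.2
  set a := π / (2 * κ)
  have hκa : κ * a = π / 2 := by simp only [a]; field_simp
  by_contra! hneg
  have had : a ≤ d := by
    by_contra! hda
    have hcos := cos_le_inner_of_norm_deriv_le hT hunit hcurv (t := s - d) (t₀ := s) (by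
      rw [sub_sub_cancel_left, abs_neg, abs_of_nonneg hd]; nlinarith [pi_pos])
    rw [sub_sub_cancel_left, mul_neg, cos_neg] at hcos
    have : 0 < cos (κ * d) := cos_pos_of_mem_Ioo ⟨by nlinarith [pi_pos], by nlinarith⟩
    linarith
  have hdisp := sin_div_le_inner_sub_of_norm_deriv_le hr hunit hcurv hκ (t₀ := s) (t := a)
    (by positivity) (by linarith [pi_pos])
  rw [hκa, sin_pi_div_two] at hdisp
  have hnear : ⟪r s - r (s - a), deriv r s⟫ ≤ dth := by
    calc _ ≤ ‖r s - r (s - a)‖ * ‖deriv r s‖ := real_inner_le_norm _ _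
      _ ≤ dth := by rw [hunit, mul_one, norm_sub_rev]; exact hball a ⟨by positivity, had⟩
  rw [div_le_iff₀ hκ] at hdisp
  nlinarith

/-- A unit-speed planar curve with curvature bounded by `κ > 0`, where
`κ d_th < 1`, cannot loop while inside a ball of radius `d_th`: as long as the
backward-traced portion of the curve has remained inside the closed ball of radius `d_th`
centered at `r s`, the tangent direction keeps a positive component along the tangent
direction at `r s`. -/
theorem stmt_9 (r : ℝ → EuclideanSpace ℝ (Fin 2)) (κ : ℝ) (hκ : 0 < κ)
    (hr : ContDiff ℝ 2 r)
    (hunit : ∀ s : ℝ, ‖deriv r s‖ = 1)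
    (hcurv : ∀ s : ℝ, ‖deriv (deriv r) s‖ ≤ κ)
    (dth : ℝ) (hdth : 0 < dth) (hκdth : κ * dth < 1) :
    ∀ s : ℝ, ∀ d : ℝ, 0 ≤ d →
      (∀ d' ∈ Set.Icc (0 : ℝ) d, ‖r (s - d') - r s‖ ≤ dth) →
      0 < ⟪deriv r (s - d), deriv r s⟫ :=
  stmt_9_general r κ hκ hr hunit hcurv dth hκdth
end

section
/- Let β_SH, σ_SH > 0 and d_1, d_r, d_{1r} > 0, and set ρ = e^{−d_1/β_SH}. Let Σ be the 2×2 matrix with diagonal entries σ_SH² and off-diagonal entries σ_SH²·e^{−d_{1r}/β_SH} (which is invertible since d_{1r} > 0), and let c be the vector (σ_SH²·e^{−d_1/β_SH}, σ_SH²·e^{−d_r/β_SH}). Then the coefficient vector α = Σ⁻¹·c has components α_1 = (e^{−d_1/β_SH} − e^{−(d_{1r}+d_r)/β_SH})/(1 − e^{−2d_{1r}/β_SH}) and α_r = (e^{−d_r/β_SH} − e^{−(d_1+d_{1r})/β_SH})/(1 − e^{−2d_{1r}/β_SH}); moreover, with Δα = (α_1 − ρ, α_r), the quadratic form satisfies σ_Δm²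 := Δαᵀ·Σ·Δα = σ_SH²·(e^{−d_r/β_SH} − e^{−(d_1+d_{1r})/β_SH})²/(1 − e^{−2d_{1r}/β_SH}). -/
open Real Matrix

/-!
Write `z = e^{−d_{1r}/β_SH}`, so that `Σ = σ_SH² [[1, z], [z, 1]]` has determinant
`σ_SH⁴ (1 − z²) ≠ 0`, and the claimed `α` is confirmed by checking `Σ α = c`. The closed form
gives `α₁ − ρ = −z α_r`, i.e. `Δα = α_r (−z, 1)`, whence `Δαᵀ Σ Δα = σ_SH² α_r² (1 − z²)`.
-/

def twoPointCov (s z : ℝ) : Matrix (Fin 2) (Fin 2) ℝ :=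
  !![s, s * z; s * z, s]

lemma det_twoPointCov (s z : ℝ) : (twoPointCov s z).det = s ^ 2 * (1 - z ^ 2) := by
  rw [twoPointCov, det_fin_two_of]; ring

lemma isUnit_det_twoPointCov {s z : ℝ} (hs : s ≠ 0) (hz : 1 - z ^ 2 ≠ 0) :
    IsUnit (twoPointCov s z).det := by
  rw [det_twoPointCov]
  exact (mul_ne_zero (pow_ne_zero 2 hs) hz).isUnit

lemma inv_mulVec_eq_of_mulVec_eq {n : Type*} [Fintype n] [DecidableEq n]
    {A : Matrix n n ℝ} (hA : IsUnit A.det) {u v : n → ℝ} (h : A *ᵥ v = u) :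
    A⁻¹ *ᵥ u = v := by
  rw [← h, mulVec_mulVec, nonsing_inv_mul A hA, one_mulVec]

lemma twoPointCov_inv_mulVec {s z : ℝ} (hs : s ≠ 0) (hz : 1 - z ^ 2 ≠ 0) (x y : ℝ) :
    (twoPointCov s z)⁻¹ *ᵥ ![s * x, s * y] =
      ![(x - z * y) / (1 - z ^ 2), (y - x * z) / (1 - z ^ 2)] := by
  refine inv_mulVec_eq_of_mulVec_eq (isUnit_det_twoPointCov hs hz) ?_
  ext i
  fin_cases i <;> simp [twoPointCov, mulVec, dotProduct, Fin.sum_univ_two] <;> field_simp <;> ring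

lemma div_one_sub_sq_sub_eq_neg_mul {x y z : ℝ} (hz : 1 - z ^ 2 ≠ 0) :
    (x - z * y) / (1 - z ^ 2) - x = -z * ((y - x * z) / (1 - z ^ 2)) := by
  field_simp; ring

lemma twoPointCov_quadForm (s z a : ℝ) :
    ![-z * a, a] ⬝ᵥ (twoPointCov s z *ᵥ ![-z * a, a]) = s * a ^ 2 * (1 - z ^ 2) := by
  simp [twoPointCov, mulVec, dotProduct, Fin.sum_univ_two]; ring

lemma exp_neg_add_div (a b β : ℝ) : exp (-(a + b) / β) = exp (-a / β) * exp (-b / β) := by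
  rw [← Real.exp_add]; ring_nf

lemma exp_neg_div_lt_one {d β : ℝ} (hd : 0 < d) (hβ : 0 < β) : exp (-d / β) < 1 :=
  Real.exp_lt_one_iff.2 (div_neg_of_neg_of_pos (neg_neg_of_pos hd) hβ)

theorem stmt_11_general (βSH σSH d1 dr d1r : ℝ)
    (hβ : 0 < βSH) (hσ : 0 < σSH) (hd1r : 0 < d1r)
    (ρ : ℝ) (hρ : ρ = Real.exp (-d1 / βSH))
    (Sig : Matrix (Fin 2) (Fin 2) ℝ)
    (hSig : Sig = !![σSH ^ 2, σSH ^ 2 * Real.exp (-d1r / βSH);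
                  σSH ^ 2 * Real.exp (-d1r / βSH), σSH ^ 2])
    (c : Fin 2 → ℝ)
    (hc : c = ![σSH ^ 2 * Real.exp (-d1 / βSH), σSH ^ 2 * Real.exp (-dr / βSH)])
    (α : Fin 2 → ℝ) (hα : α = Sig⁻¹.mulVec c)
    (Δα : Fin 2 → ℝ) (hΔα : Δα = ![α 0 - ρ, α 1]) :
    IsUnit Sig.det ∧
    α 0 = (Real.exp (-d1 / βSH) - Real.exp (-(d1r + dr) / βSH)) /
        (1 - Real.exp (-2 * d1r / βSH)) ∧
    α 1 = (Real.exp (-dr / βSH) - Real.exp (-(d1 + d1r) / βSH)) /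
        (1 - Real.exp (-2 * d1r / βSH)) ∧
    Δα ⬝ᵥ Sig.mulVec Δα =
      σSH ^ 2 * (Real.exp (-dr / βSH) - Real.exp (-(d1 + d1r) / βSH)) ^ 2 /
        (1 - Real.exp (-2 * d1r / βSH)) := by
  change Sig = twoPointCov (σSH ^ 2) (exp (-d1r / βSH)) at hSig
  have hs : σSH ^ 2 ≠ 0 := by positivity
  have hz : 1 - exp (-d1r / βSH) ^ 2 ≠ 0 :=
    sub_ne_zero.2 (pow_lt_one₀ (exp_pos _).le (exp_neg_div_lt_one hd1r hβ) two_ne_zero).ne'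
  have hz2 : exp (-2 * d1r / βSH) = exp (-d1r / βSH) ^ 2 := by
    rw [show -2 * d1r = -(d1r + d1r) by ring, exp_neg_add_div, sq]
  rw [exp_neg_add_div, exp_neg_add_div, hz2]
  have hαv := twoPointCov_inv_mulVec hs hz (exp (-d1 / βSH)) (exp (-dr / βSH))
  rw [← hSig, ← hc, ← hα] at hαv
  have hα0 := congrFun hαv 0
  have hα1 := congrFun hαv 1
  simp only [cons_val_zero, cons_val_one, cons_val_fin_one] at hα0 hα1
  have hΔ : Δα = ![-exp (-d1r / βSH) * α 1, α 1] := by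
    rw [hΔα, hρ, hα0, hα1, div_one_sub_sq_sub_eq_neg_mul hz]
  refine ⟨hSig ▸ isUnit_det_twoPointCov hs hz, by rw [hα0, mul_comm], hα1, ?_⟩
  rw [hΔ, hSig, twoPointCov_quadForm, hα1]
  field_simp

/-- In the three-point analysis, the coefficient vector `α = Σ⁻¹ c` of
the conditional mean has the stated closed form, and the quadratic form
`Δαᵀ Σ Δα` (with `Δα = (α₁ − ρ, α_r)`) equals
`σ_SH² (e^{−d_r/β} − e^{−(d₁+d_{1r})/β})² / (1 − e^{−2d_{1r}/β})`. -/
theorem stmt_11 (βSH σSH d1 dr d1r : ℝ)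
    (hβ : 0 < βSH) (hσ : 0 < σSH) (hd1 : 0 < d1) (hdr : 0 < dr) (hd1r : 0 < d1r)
    (ρ : ℝ) (hρ : ρ = Real.exp (-d1 / βSH))
    (Sig : Matrix (Fin 2) (Fin 2) ℝ)
    (hSig : Sig = !![σSH ^ 2, σSH ^ 2 * Real.exp (-d1r / βSH);
                  σSH ^ 2 * Real.exp (-d1r / βSH), σSH ^ 2])
    (c : Fin 2 → ℝ)
    (hc : c = ![σSH ^ 2 * Real.exp (-d1 / βSH), σSH ^ 2 * Real.exp (-dr / βSH)])
    (α : Fin 2 → ℝ) (hα : α = Sig⁻¹.mulVec c)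
    (Δα : Fin 2 → ℝ) (hΔα : Δα = ![α 0 - ρ, α 1]) :
    IsUnit Sig.det ∧
    α 0 = (Real.exp (-d1 / βSH) - Real.exp (-(d1r + dr) / βSH)) /
        (1 - Real.exp (-2 * d1r / βSH)) ∧
    α 1 = (Real.exp (-dr / βSH) - Real.exp (-(d1 + d1r) / βSH)) /
        (1 - Real.exp (-2 * d1r / βSH)) ∧
    Δα ⬝ᵥ Sig.mulVec Δα =
      σSH ^ 2 * (Real.exp (-dr / βSH) - Real.exp (-(d1 + d1r) / βSH)) ^ 2 /
        (1 - Real.exp (-2 * d1r / βSH)) :=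
  stmt_11_general βSH σSH d1 dr d1r hβ hσ hd1r ρ hρ Sig hSig c hc α hα Δα hΔα
end

section
/- Let β_SH, σ_SH > 0 and d_1, d_r, d_{1r} > 0, set ρ = e^{−d_1/β_SH}, a = e^{−d_{1r}/β_SH}, σ̂² = σ_SH²(1 − ρ²), α_1 = (e^{−d_1/β_SH} − e^{−(d_{1r}+d_r)/β_SH})/(1 − e^{−2d_{1r}/β_SH}), α_r = (e^{−d_r/β_SH} − e^{−(d_1+d_{1r})/β_SH})/(1 − e^{−2d_{1r}/β_SH}), σ_Δm² = σ_SH²·(e^{−d_r/β_SH} − e^{−(d_1+d_{1r})/β_SH})²/(1 − e^{−2d_{1r}/β_SH}), and σ² = σ̂² − σ_Δm², and assume σ_Δm² < σ̂² (so σ² > 0). Let Z_1, Z_2 be independent standard Gaussian random variables, and define the jointly Gaussian pair W_1 = σ_SH·Z_1 and W_r = σ_SH·(a·Z_1 + √(1 − a²)·Z_2). Define the Kullback–Leibler divergence random variable KL = ((α_1 − ρ)W_1 + α_r·W_r)²/(2σ̂²) + (1/2)·(σ²/σ̂² − 1 − log(σ²/σ̂²)). Then the mean of KL is E[KL] = −(1/2)·log(1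 − σ_Δm²/σ̂²) and the standard deviation of KL is √(Var[KL]) = σ_Δm²/(√2·σ̂²). -/
/-!
Because `α₁ - ρ + α_r a = 0`, the `Z₁`-component of the residual `(α₁ - ρ) W₁ + α_r W_r` cancels:
the residual is `σ_SH α_r √(1 - a²) Z₂`, whose square is `σ_Δm² Z₂²`. So `KL = c Z₂² + K` with
`c = σ_Δm² / (2 σ̂²)`, an affine function of a `χ²₁` variable. The Gaussian moments
`E Z^(2k) = (2k - 1)‼` give `E Z² = 1` and `Var Z² = 3 - 1 = 2`, hence `E KL = c + K`, which
simplifies to `-(1/2) log (1 - σ_Δm²/σ̂²)`, and `Var KL = 2 c²`.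
-/

open MeasureTheory ProbabilityTheory Real
open scoped Nat

lemma integral_pow_mul_exp_neg_sq_div_two (k : ℕ) :
    ∫ x : ℝ, x ^ (2 * k) * exp (-x ^ 2 / 2) = √(2 * π) * (2 * k - 1 : ℕ)‼ := by
  have hk : -1 < ((2 * k : ℕ) : ℝ) := neg_one_lt_zero.trans_le (Nat.cast_nonneg _)
  have hhalf : ∫ x in Set.Ioi (0 : ℝ), x ^ (2 * k) * exp (-x ^ 2 / 2) =
      (1 / 2 : ℝ) ^ (-(((2 * k : ℕ) : ℝ) + 1) / 2) * (1 / 2) *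
        Gamma ((((2 * k : ℕ) : ℝ) + 1) / 2) := by
    rw [← integral_rpow_mul_exp_neg_mul_rpow two_pos hk (by norm_num)]
    refine setIntegral_congr_fun measurableSet_Ioi fun x _ => ?_
    simp only [rpow_natCast, rpow_two]
    ring_nf
  have hGamma : Gamma ((((2 * k : ℕ) : ℝ) + 1) / 2) = (2 * k - 1 : ℕ)‼ * √π / 2 ^ k := by
    rw [← Gamma_nat_add_half]; push_cast; ring_nf
  have hpow : (1 / 2 : ℝ) ^ (-(((2 * k : ℕ) : ℝ) + 1) / 2) = 2 ^ k * √2 := by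
    rw [one_div, inv_rpow zero_le_two, ← rpow_neg zero_le_two, sqrt_eq_rpow, ← rpow_natCast,
      ← rpow_add two_pos]
    congr 1; push_cast; ring
  calc ∫ x : ℝ, x ^ (2 * k) * exp (-x ^ 2 / 2)
      = 2 * ∫ x in Set.Ioi (0 : ℝ), x ^ (2 * k) * exp (-x ^ 2 / 2) := by
        rw [← integral_comp_abs]
        simp only [pow_mul, sq_abs]
    _ = √(2 * π) * (2 * k - 1 : ℕ)‼ := by
        rw [hhalf, hGamma, hpow, sqrt_mul zero_le_two]
        field_simp

lemma integral_pow_gaussianReal (k : ℕ) :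
    ∫ x, x ^ (2 * k) ∂gaussianReal 0 1 = (2 * k - 1 : ℕ)‼ := by
  rw [integral_gaussianReal_eq_integral_smul one_ne_zero]
  simp only [gaussianPDFReal, NNReal.coe_one, mul_one, sub_zero, smul_eq_mul, mul_assoc,
    integral_const_mul, mul_comm (exp _), integral_pow_mul_exp_neg_sq_div_two]
  have : 0 < √(2 * π) := by positivity
  field_simp

lemma integral_sq_gaussianReal : ∫ x, x ^ 2 ∂gaussianReal 0 1 = 1 := by
  simpa using integral_pow_gaussianReal 1

lemma variance_sq_gaussianReal : Var[fun x ↦ x ^ 2; gaussianReal 0 1] = 2 := by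
  have h4 : MemLp (fun x : ℝ ↦ x ^ 2) 2 (gaussianReal 0 1) := by
    rw [memLp_two_iff_integrable_sq (by fun_prop)]
    have h := (memLp_id_gaussianReal (μ := 0) (v := 1) 4).integrable_norm_pow' (p := 4)
    simpa [← pow_mul, Even.pow_abs ⟨2, rfl⟩] using h
  rw [variance_eq_sub h4]
  simp only [Pi.pow_apply, ← pow_mul]
  rw [integral_pow_gaussianReal 2, integral_sq_gaussianReal]
  norm_num [Nat.doubleFactorial]

section AffineChiSquare

variable {Ω : Type*} [MeasurableSpace Ω] {P : Measure Ω} {Z : Ω → ℝ}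

lemma integral_mul_sq_add_const_of_measurePreserving
    (hZ : MeasurePreserving Z P (gaussianReal 0 1)) (c K : ℝ) :
    ∫ ω, c * Z ω ^ 2 + K ∂P = c + K := by
  have hsq : Integrable (fun x : ℝ ↦ x ^ 2) (gaussianReal 0 1) := by
    simpa using (memLp_id_gaussianReal (μ := 0) (v := 1) 2).integrable_norm_pow' (p := 2)
  rw [← integral_map (f := fun x ↦ c * x ^ 2 + K) hZ.aemeasurable (by fun_prop), hZ.map_eq,
    integral_add (hsq.const_mul c) (integrable_const K), integral_const_mul,
    integral_sq_gaussianReal]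
  simp

lemma variance_mul_sq_add_const_of_measurePreserving [IsProbabilityMeasure P]
    (hZ : MeasurePreserving Z P (gaussianReal 0 1)) (c K : ℝ) :
    Var[fun ω ↦ c * Z ω ^ 2 + K; P] = 2 * c ^ 2 := by
  have hZm := hZ.measurable
  rw [variance_add_const (by fun_prop) K, variance_const_mul,
    hZ.variance_fun_comp (f := fun x ↦ x ^ 2) (by fun_prop), variance_sq_gaussianReal, mul_comm]

end AffineChiSquare

lemma sq_regression_residual {σ ρ a e z₁ z₂ : ℝ} (ha : a ^ 2 < 1) :
    (((ρ - a * e) / (1 - a ^ 2) - ρ) * (σ * z₁) +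
        (e - ρ * a) / (1 - a ^ 2) * (σ * (a * z₁ + √(1 - a ^ 2) * z₂))) ^ 2 =
      σ ^ 2 * (e - ρ * a) ^ 2 / (1 - a ^ 2) * z₂ ^ 2 := by
  have hpos : 0 < 1 - a ^ 2 := by linarith
  have hsqrt : √(1 - a ^ 2) ^ 2 = 1 - a ^ 2 := sq_sqrt hpos.le
  have hlin : ((ρ - a * e) / (1 - a ^ 2) - ρ) * (σ * z₁) +
      (e - ρ * a) / (1 - a ^ 2) * (σ * (a * z₁ + √(1 - a ^ 2) * z₂)) =
        σ * (e - ρ * a) / (1 - a ^ 2) * √(1 - a ^ 2) * z₂ := by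
    field_simp
    ring
  rw [hlin, mul_pow, mul_pow, hsqrt]
  field_simp

theorem stmt_13_general
    {Ω : Type*} [MeasurableSpace Ω] (P : Measure Ω) [IsProbabilityMeasure P]
    (βSH σSH d1 dr d1r : ℝ)
    (hβ : 0 < βSH) (hd1r : 0 < d1r)
    (ρ a : ℝ) (hρ : ρ = Real.exp (-d1 / βSH)) (ha : a = Real.exp (-d1r / βSH))
    (σhat2 : ℝ)
    (α1 αr : ℝ)
    (hα1 : α1 = (Real.exp (-d1 / βSH) - Real.exp (-(d1r + dr) / βSH)) /
      (1 - Real.exp (-2 * d1r / βSH)))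
    (hαr : αr = (Real.exp (-dr / βSH) - Real.exp (-(d1 + d1r) / βSH)) /
      (1 - Real.exp (-2 * d1r / βSH)))
    (σΔm2 : ℝ)
    (hσΔm2 : σΔm2 =
      σSH ^ 2 * (Real.exp (-dr / βSH) - Real.exp (-(d1 + d1r) / βSH)) ^ 2 /
        (1 - Real.exp (-2 * d1r / βSH)))
    (σ2 : ℝ) (hσ2 : σ2 = σhat2 - σΔm2) (hpos : σΔm2 < σhat2)
    -- independent standard Gaussians
    (Z1 Z2 : Ω → ℝ) (hZ2meas : Measurable Z2)
    (hZ2law : Measure.map Z2 P = gaussianReal 0 1)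
    -- the jointly Gaussian pair
    (W1 Wr : Ω → ℝ)
    (hW1 : ∀ ω, W1 ω = σSH * Z1 ω)
    (hWr : ∀ ω, Wr ω = σSH * (a * Z1 ω + Real.sqrt (1 - a ^ 2) * Z2 ω))
    -- the KL divergence random variable
    (KL : Ω → ℝ)
    (hKL : ∀ ω, KL ω =
      ((α1 - ρ) * W1 ω + αr * Wr ω) ^ 2 / (2 * σhat2) +
        (1 / 2) * (σ2 / σhat2 - 1 - Real.log (σ2 / σhat2))) :
    (∫ ω, KL ω ∂P = -(1 / 2) * Real.log (1 - σΔm2 / σhat2)) ∧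
    Real.sqrt (variance KL P) = σΔm2 / (Real.sqrt 2 * σhat2) := by
  set e := exp (-dr / βSH)
  have ha2 : a ^ 2 < 1 := by
    refine pow_lt_one₀ (by rw [ha]; positivity) ?_ two_ne_zero
    rw [ha, exp_lt_one_iff]
    exact div_neg_of_neg_of_pos (neg_neg_of_pos hd1r) hβ
  have hexp_r : exp (-(d1r + dr) / βSH) = a * e := by rw [ha, ← exp_add]; ring_nf
  have hexp_1 : exp (-(d1 + d1r) / βSH) = ρ * a := by rw [hρ, ha, ← exp_add]; ring_nf
  have hexp_sq : exp (-2 * d1r / βSH) = a ^ 2 := by rw [ha, ← exp_nat_mul]; ring_nf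
  rw [hexp_r, hexp_sq, ← hρ] at hα1
  rw [hexp_1, hexp_sq] at hαr hσΔm2
  have hΔ : 0 ≤ σΔm2 := by rw [hσΔm2]; have := sub_pos.2 ha2; positivity
  have hσhat : 0 < σhat2 := hΔ.trans_lt hpos
  have hKL' : KL = fun ω ↦ σΔm2 / (2 * σhat2) * Z2 ω ^ 2 +
      (1 / 2) * (σ2 / σhat2 - 1 - log (σ2 / σhat2)) := by
    ext ω
    rw [hKL, hW1, hWr, hα1, hαr, sq_regression_residual ha2, hσΔm2]
    ring
  have hZ2 : MeasurePreserving Z2 P (gaussianReal 0 1) := ⟨hZ2meas, hZ2law⟩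
  have hratio : σ2 / σhat2 = 1 - σΔm2 / σhat2 := by
    rw [hσ2, sub_div, div_self hσhat.ne']
  rw [hKL', integral_mul_sq_add_const_of_measurePreserving hZ2,
    variance_mul_sq_add_const_of_measurePreserving hZ2, hratio]
  refine ⟨by ring, ?_⟩
  rw [sqrt_mul zero_le_two, sqrt_sq (by positivity)]
  have h2 : √2 * √2 = 2 := mul_self_sqrt zero_le_two
  field_simp
  linear_combination σΔm2 * h2

/-- The Kullback–Leibler divergence between the true two-point
conditional distribution `N(m, σ²)` and its Markov approximation `N(m̂, σ̂²)` in the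
three-point analysis, viewed as a random variable through the jointly Gaussian pair
`(W₁, W_r)`, has mean `−(1/2) log(1 − σ_Δm²/σ̂²)` and standard deviation
`σ_Δm²/(√2 σ̂²)`. -/
theorem stmt_13
    {Ω : Type*} [MeasurableSpace Ω] (P : Measure Ω) [IsProbabilityMeasure P]
    (βSH σSH d1 dr d1r : ℝ)
    (hβ : 0 < βSH) (hσ : 0 < σSH) (hd1 : 0 < d1) (hdr : 0 < dr) (hd1r : 0 < d1r)
    (ρ a : ℝ) (hρ : ρ = Real.exp (-d1 / βSH)) (ha : a = Real.exp (-d1r / βSH))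
    (σhat2 : ℝ) (hσhat2 : σhat2 = σSH ^ 2 * (1 - ρ ^ 2))
    (α1 αr : ℝ)
    (hα1 : α1 = (Real.exp (-d1 / βSH) - Real.exp (-(d1r + dr) / βSH)) /
      (1 - Real.exp (-2 * d1r / βSH)))
    (hαr : αr = (Real.exp (-dr / βSH) - Real.exp (-(d1 + d1r) / βSH)) /
      (1 - Real.exp (-2 * d1r / βSH)))
    (σΔm2 : ℝ)
    (hσΔm2 : σΔm2 =
      σSH ^ 2 * (Real.exp (-dr / βSH) - Real.exp (-(d1 + d1r) / βSH)) ^ 2 /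
        (1 - Real.exp (-2 * d1r / βSH)))
    (σ2 : ℝ) (hσ2 : σ2 = σhat2 - σΔm2) (hpos : σΔm2 < σhat2)
    -- independent standard Gaussians
    (Z1 Z2 : Ω → ℝ) (hZ1meas : Measurable Z1) (hZ2meas : Measurable Z2)
    (hindep : IndepFun Z1 Z2 P)
    (hZ1law : Measure.map Z1 P = gaussianReal 0 1)
    (hZ2law : Measure.map Z2 P = gaussianReal 0 1)
    -- the jointly Gaussian pair
    (W1 Wr : Ω → ℝ)
    (hW1 : ∀ ω, W1 ω = σSH * Z1 ω)
    (hWr : ∀ ω, Wr ω = σSH * (a * Z1 ω + Real.sqrt (1 - a ^ 2) * Z2 ω))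
    -- the KL divergence random variable
    (KL : Ω → ℝ)
    (hKL : ∀ ω, KL ω =
      ((α1 - ρ) * W1 ω + αr * Wr ω) ^ 2 / (2 * σhat2) +
        (1 / 2) * (σ2 / σhat2 - 1 - Real.log (σ2 / σhat2))) :
    (∫ ω, KL ω ∂P = -(1 / 2) * Real.log (1 - σΔm2 / σhat2)) ∧
    Real.sqrt (variance KL P) = σΔm2 / (Real.sqrt 2 * σhat2) :=
  stmt_13_general P βSH σSH d1 dr d1r hβ hd1r ρ a hρ ha σhat2 α1 αr hα1 hαr σΔm2 hσΔm2 σ2 hσ2 hpos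
    Z1 Z2 hZ2meas hZ2law W1 Wr hW1 hWr KL hKL
end

section
/- (a) For any z_l ≥ 0, the function h(z) = (1 − e^{−(z − z_l)})²/(1 − e^{−2z}) is strictly increasing on (z_l, ∞). (b) Consequently, for β_SH, σ_SH > 0 and 0 < d_1 < d_r, the function σ_Δm²(d_{1r}) = σ_SH²·(e^{−d_r/β_SH} − e^{−(d_1+d_{1r})/β_SH})²/(1 − e^{−2d_{1r}/β_SH}) attains its maximum over d_{1r} ∈ [d_r − d_1, d_r + d_1] at d_{1r} = d_r + d_1, where it equals σ_SH²·e^{−2d_r/β_SH}·(1 − ρ²)²/(1 − ρ²·e^{−2d_r/β_SH}) with ρ = e^{−d_1/β_SH}. -/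
/-!
Pulling `e^{-d_r/β}` out of the numerator writes `σ_Δm²(d_{1r})` as
`σ_SH² e^{-2d_r/β} h(d_{1r}/β)` with `z_l = (d_r - d_1)/β ≥ 0`, so (b) reduces to (a) at
`z ∈ [z_l, (d_r + d_1)/β]`. For (a), with `b = e^{-(z - z_l)}` and `a = e^{-2z}`,
`h' = 2(1 - b)(b - a)/(1 - a)²`, which is positive because `a < b < 1` for `z > z_l ≥ 0`;
since `h(z_l) = 0 < h(z)` for `z > z_l`, `h` is also increasing on the closed ray `[z_l, ∞)`.
-/

open Real Set

noncomputable def gapRatio (zl z : ℝ) : ℝ :=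
  (1 - exp (-(z - zl))) ^ 2 / (1 - exp (-2 * z))

theorem hasDerivAt_gapRatio (zl : ℝ) {z : ℝ} (hz : 0 < z) :
    HasDerivAt (gapRatio zl)
      (2 * (1 - exp (-(z - zl))) * (exp (-(z - zl)) - exp (-2 * z)) /
        (1 - exp (-2 * z)) ^ 2) z := by
  have hden : 1 - exp (-2 * z) ≠ 0 := (sub_pos.mpr (exp_lt_one_iff.mpr (by linarith))).ne'
  have hnum : HasDerivAt (fun x => 1 - exp (-(x - zl))) (exp (-(z - zl))) z := by
    simpa using (((hasDerivAt_id z).sub_const zl).neg.exp).const_sub 1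
  have hden' : HasDerivAt (fun x => 1 - exp (-2 * x)) (exp (-2 * z) * 2) z := by
    simpa using (((hasDerivAt_id z).const_mul (-2)).exp).const_sub 1
  exact ((hnum.pow 2).div hden' hden).congr_deriv (by simp only [Pi.pow_apply]; ring)

theorem gapRatio_strictMonoOn_Ioi {zl : ℝ} (hzl : 0 ≤ zl) :
    StrictMonoOn (gapRatio zl) (Ioi zl) := by
  have hderiv : ∀ z ∈ Ioi zl, HasDerivAt (gapRatio zl) _ z := fun z hz =>
    hasDerivAt_gapRatio zl (hzl.trans_lt hz)
  refine strictMonoOn_of_hasDerivWithinAt_pos (convex_Ioi zl)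
    (fun z hz => (hderiv z hz).continuousAt.continuousWithinAt)
    (fun z hz => (hderiv z (interior_subset hz)).hasDerivWithinAt) fun z hz => ?_
  rw [interior_Ioi] at hz
  have hz0 : 0 < z := hzl.trans_lt hz
  have hb : exp (-(z - zl)) < 1 := exp_lt_one_iff.mpr (by linarith [mem_Ioi.mp hz])
  have hab : exp (-2 * z) < exp (-(z - zl)) := exp_lt_exp.mpr (by linarith [mem_Ioi.mp hz])
  have ha : exp (-2 * z) < 1 := hab.trans hb
  have : 0 < 1 - exp (-(z - zl)) := by linarith
  have : 0 < exp (-(z - zl)) - exp (-2 * z) := by linarith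
  have : 0 < 1 - exp (-2 * z) := by linarith
  positivity

theorem gapRatio_self (zl : ℝ) : gapRatio zl zl = 0 := by
  simp [gapRatio]

theorem gapRatio_pos {zl z : ℝ} (hzl : 0 ≤ zl) (hz : zl < z) : 0 < gapRatio zl z := by
  have hb : exp (-(z - zl)) < 1 := exp_lt_one_iff.mpr (by linarith)
  have ha : exp (-2 * z) < 1 := exp_lt_one_iff.mpr (by linarith)
  exact div_pos (pow_pos (sub_pos.mpr hb) 2) (sub_pos.mpr ha)

theorem gapRatio_strictMonoOn_Ici {zl : ℝ} (hzl : 0 ≤ zl) :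
    StrictMonoOn (gapRatio zl) (Ici zl) := by
  intro x hx y hy hxy
  rcases (mem_Ici.mp hx).eq_or_lt with rfl | hx'
  · rw [gapRatio_self]
    exact gapRatio_pos hzl hxy
  · exact gapRatio_strictMonoOn_Ioi hzl hx' (hx'.trans hxy) hxy

noncomputable def meanGapVariance (σ β d1 dr d1r : ℝ) : ℝ :=
  σ ^ 2 * (exp (-dr / β) - exp (-(d1 + d1r) / β)) ^ 2 / (1 - exp (-2 * d1r / β))

theorem meanGapVariance_eq_gapRatio (σ d1 dr d1r : ℝ) {β : ℝ} (hβ : β ≠ 0) :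
    meanGapVariance σ β d1 dr d1r =
      σ ^ 2 * exp (-2 * dr / β) * gapRatio ((dr - d1) / β) (d1r / β) := by
  have hshift : exp (-(d1 + d1r) / β) = exp (-dr / β) * exp (-(d1r / β - (dr - d1) / β)) := by
    rw [← exp_add]; congr 1; field_simp; ring
  have hsq : exp (-2 * dr / β) = exp (-dr / β) ^ 2 := by
    rw [← exp_nat_mul]; congr 1; field_simp; ring
  have hden : exp (-2 * d1r / β) = exp (-2 * (d1r / β)) := by rw [mul_div_assoc]
  rw [meanGapVariance, gapRatio, hshift, hsq, hden]
  ring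

theorem meanGapVariance_monotoneOn (σ : ℝ) {β d1 dr : ℝ} (hβ : 0 < β) (hd : d1 ≤ dr) :
    MonotoneOn (meanGapVariance σ β d1 dr) (Ici (dr - d1)) := by
  intro x hx y hy hxy
  have hzl : 0 ≤ (dr - d1) / β := div_nonneg (sub_nonneg.mpr hd) hβ.le
  have hmem : ∀ {t}, t ∈ Ici (dr - d1) → t / β ∈ Ici ((dr - d1) / β) := fun ht =>
    div_le_div_of_nonneg_right ht hβ.le
  rw [meanGapVariance_eq_gapRatio σ d1 dr x hβ.ne', meanGapVariance_eq_gapRatio σ d1 dr y hβ.ne']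
  gcongr
  exact (gapRatio_strictMonoOn_Ici hzl).monotoneOn (hmem hx) (hmem hy)
    (div_le_div_of_nonneg_right hxy hβ.le)

theorem meanGapVariance_add (σ β d1 dr : ℝ) (hβ : β ≠ 0) :
    meanGapVariance σ β d1 dr (dr + d1) =
      σ ^ 2 * exp (-2 * dr / β) * (1 - exp (-d1 / β) ^ 2) ^ 2 /
        (1 - exp (-d1 / β) ^ 2 * exp (-2 * dr / β)) := by
  have hnum : exp (-(d1 + (dr + d1)) / β) = exp (-d1 / β) ^ 2 * exp (-dr / β) := by
    rw [← exp_nat_mul, ← exp_add]; congr 1; field_simp; ring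
  have hden : exp (-2 * (dr + d1) / β) = exp (-d1 / β) ^ 2 * exp (-2 * dr / β) := by
    rw [← exp_nat_mul, ← exp_add]; congr 1; field_simp; ring
  have hsq : exp (-2 * dr / β) = exp (-dr / β) ^ 2 := by
    rw [← exp_nat_mul]; congr 1; field_simp; ring
  rw [meanGapVariance, hnum, hden, hsq]
  ring

theorem stmt_14_general (zl : ℝ) (hzl : 0 ≤ zl)
    (βSH σSH d1 dr : ℝ) (hβ : 0 < βSH)
    (hd1dr : d1 < dr)
    (h : ℝ → ℝ)
    (hh : ∀ z, h z = (1 - Real.exp (-(z - zl))) ^ 2 / (1 - Real.exp (-2 * z)))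
    (σΔm2 : ℝ → ℝ)
    (hσΔm2 : ∀ d1r, σΔm2 d1r =
      σSH ^ 2 * (Real.exp (-dr / βSH) - Real.exp (-(d1 + d1r) / βSH)) ^ 2 /
        (1 - Real.exp (-2 * d1r / βSH)))
    (ρ : ℝ) (hρ : ρ = Real.exp (-d1 / βSH)) :
    StrictMonoOn h (Set.Ioi zl) ∧
    (∀ d1r ∈ Set.Icc (dr - d1) (dr + d1), σΔm2 d1r ≤ σΔm2 (dr + d1)) ∧
    σΔm2 (dr + d1) =
      σSH ^ 2 * Real.exp (-2 * dr / βSH) * (1 - ρ ^ 2) ^ 2 /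
        (1 - ρ ^ 2 * Real.exp (-2 * dr / βSH)) := by
  obtain rfl : h = gapRatio zl := funext hh
  obtain rfl : σΔm2 = meanGapVariance σSH βSH d1 dr := funext hσΔm2
  subst hρ
  refine ⟨gapRatio_strictMonoOn_Ioi hzl, fun d1r ⟨hlo, hhi⟩ => ?_,
    meanGapVariance_add σSH βSH d1 dr hβ.ne'⟩
  exact meanGapVariance_monotoneOn σSH hβ hd1dr.le hlo (hlo.trans hhi) hhi

/-- (a) For `z_l ≥ 0`, the function
`h(z) = (1 − e^{−(z−z_l)})²/(1 − e^{−2z})` is strictly increasing on `(z_l, ∞)`.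
(b) Consequently, for `0 < d₁ < d_r`, the mean-difference variance
`σ_Δm²(d_{1r})` attains its maximum over `d_{1r} ∈ [d_r − d₁, d_r + d₁]` at
`d_{1r} = d_r + d₁`, where it equals
`σ_SH² e^{−2d_r/β}(1 − ρ²)²/(1 − ρ² e^{−2d_r/β})` with `ρ = e^{−d₁/β}`. -/
theorem stmt_14 (zl : ℝ) (hzl : 0 ≤ zl)
    (βSH σSH d1 dr : ℝ) (hβ : 0 < βSH) (hσ : 0 < σSH)
    (hd1 : 0 < d1) (hd1dr : d1 < dr)
    (h : ℝ → ℝ)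
    (hh : ∀ z, h z = (1 - Real.exp (-(z - zl))) ^ 2 / (1 - Real.exp (-2 * z)))
    (σΔm2 : ℝ → ℝ)
    (hσΔm2 : ∀ d1r, σΔm2 d1r =
      σSH ^ 2 * (Real.exp (-dr / βSH) - Real.exp (-(d1 + d1r) / βSH)) ^ 2 /
        (1 - Real.exp (-2 * d1r / βSH)))
    (ρ : ℝ) (hρ : ρ = Real.exp (-d1 / βSH)) :
    StrictMonoOn h (Set.Ioi zl) ∧
    (∀ d1r ∈ Set.Icc (dr - d1) (dr + d1), σΔm2 d1r ≤ σΔm2 (dr + d1)) ∧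
    σΔm2 (dr + d1) =
      σSH ^ 2 * Real.exp (-2 * dr / βSH) * (1 - ρ ^ 2) ^ 2 /
        (1 - ρ ^ 2 * Real.exp (-2 * dr / βSH)) :=
  stmt_14_general zl hzl βSH σSH d1 dr hβ hd1dr h hh σΔm2 hσΔm2 ρ hρ
end

section
/- Let β_SH > 0, ρ ∈ (0,1), and ε_d ∈ (0,1). Then for every d_r > 0, the inequality e^{−2 d_r/β_SH}·(1 − ρ²)/(1 − ρ²·e^{−2 d_r/β_SH}) ≤ ε_d holds if and only if d_r ≥ (β_SH/2)·log(ρ² + (1 − ρ²)/ε_d). In particular, d_th = (β_SH/2)·log(ρ² + (1 − ρ²)/ε_d) is the minimum ball radius such that every point at distance at least d_th from the current point contributes a normalized mean-difference variance σ_Δm²/σ̂² at most ε_d in the worst case. -/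
open Real

/-
Put `e = exp (-2 d_r / β_SH) ∈ (0, 1)` and `q = ρ²`. Clearing the positive denominator `1 - q e`,
the bound `e (1 - q) / (1 - q e) ≤ ε_d` is linear in `e`, namely `e (1 - q + q ε_d) ≤ ε_d`, i.e.
`q + (1 - q) / ε_d ≤ 1 / e = exp (2 d_r / β_SH)`; taking logarithms gives the threshold.
-/

lemma mul_one_sub_div_one_sub_mul_le_iff {q e ε : ℝ} (he : 0 < e) (hqe : q * e < 1)
    (hε : 0 < ε) :
    e * (1 - q) / (1 - q * e) ≤ ε ↔ q + (1 - q) / ε ≤ e⁻¹ := by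
  have hgap : e⁻¹ - (q + (1 - q) / ε) = (ε * (1 - q * e) - e * (1 - q)) / (ε * e) := by
    field_simp
    ring
  rw [div_le_iff₀ (sub_pos.2 hqe), ← sub_nonneg, ← sub_nonneg (a := e⁻¹), hgap,
    le_div_iff₀ (mul_pos hε he), zero_mul]

lemma half_mul_log_le_iff_le_exp {β A d : ℝ} (hβ : 0 < β) (hA : 0 < A) :
    β / 2 * log A ≤ d ↔ A ≤ exp (2 * d / β) := by
  rw [← log_le_iff_le_exp hA, le_div_iff₀ hβ]
  constructor <;> intro h <;> linarith

/-- For `β_SH > 0`, `ρ ∈ (0,1)` and `ε_d ∈ (0,1)`, the worst-case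
normalized mean-difference variance at distance `d_r > 0` satisfies
`e^{−2d_r/β}(1 − ρ²)/(1 − ρ² e^{−2d_r/β}) ≤ ε_d` if and only if
`d_r ≥ (β/2) log(ρ² + (1 − ρ²)/ε_d)`; the right-hand side is the minimum ball radius. -/
theorem stmt_15 (βSH ρ εd : ℝ) (hβ : 0 < βSH)
    (hρ : ρ ∈ Set.Ioo (0 : ℝ) 1) (hεd : εd ∈ Set.Ioo (0 : ℝ) 1)
    (dr : ℝ) (hdr : 0 < dr) :
    Real.exp (-2 * dr / βSH) * (1 - ρ ^ 2) /
        (1 - ρ ^ 2 * Real.exp (-2 * dr / βSH)) ≤ εd ↔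
      (βSH / 2) * Real.log (ρ ^ 2 + (1 - ρ ^ 2) / εd) ≤ dr := by
  obtain ⟨hρ0, hρ1⟩ := hρ
  have hρsq : ρ ^ 2 < 1 := pow_lt_one₀ hρ0.le hρ1 two_ne_zero
  have he1 : exp (-2 * dr / βSH) < 1 := exp_lt_one_iff.2 (div_neg_of_neg_of_pos (by linarith) hβ)
  have hqe : ρ ^ 2 * exp (-2 * dr / βSH) < 1 :=
    mul_lt_one_of_nonneg_of_lt_one_left (sq_nonneg ρ) hρsq he1.le
  have hinv : (exp (-2 * dr / βSH))⁻¹ = exp (2 * dr / βSH) := by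
    rw [← exp_neg]
    ring_nf
  have hthreshold : 0 < ρ ^ 2 + (1 - ρ ^ 2) / εd :=
    add_pos (pow_pos hρ0 2) (div_pos (sub_pos.2 hρsq) hεd.1)
  rw [mul_one_sub_div_one_sub_mul_le_iff (exp_pos _) hqe hεd.1, hinv,
    half_mul_log_le_iff_le_exp hβ hthreshold]
end

section
/- Let (Z_k)_{k∈ℕ} be i.i.d. standard Gaussian random variables and (M_k)_{k∈ℕ} be i.i.d. real random variables with common law ν whose cumulative distribution function F(t) = ν((−∞, t]) is continuous, with the two families (Z_k) and (M_k) independent of each other. Let σ_SH, β_SH, Δd > 0, ρ = e^{−Δd/β_SH}, let (g_k)_{k∈ℕ} be a sequence of real numbers and c ∈ ℝ. Define the shadowing process S_0 = σ_SH·Z_0, S_{k+1} = ρ·S_k + σ_SH·√(1 − ρ²)·Z_{k+1}, and the channel power Γ_k = g_k + S_k + M_k. Define functions J_k : ℝ → ℝ recursively by J_0(x) = F(c − g_0 − x)·φ_{σ_SH²}(x) and J_{k+1}(x) = F(c − g_{k+1} − x)·∫_ℝ φ_{σ_SH²(1−ρ²)}(x − ρ u)·J_k(u) du, where φ_v(t)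 = (2πv)^{−1/2}·e^{−t²/(2v)} is the centered Gaussian density with variance v. Then for every N ∈ ℕ, the probability that connectivity fails at all of the first N+1 steps equals P( Γ_k < c for all k ∈ {0, 1, …, N} ) = ∫_ℝ J_N(x) dx. -/
/-!
Write `E_N` for the event that the first `N + 1` steps all fail. By induction on `N`,
`E[1_{E_N} h(S_N)] = ∫ J_N(x) h(x) dx` for every bounded measurable `h`; `h = 1` is the theorem.
Both `E_N` and `S_N` are functions of `(Z_k, M_k)_{k ≤ N}`, which is independent of
`(Z_{N+1}, M_{N+1})`, and `S_{N+1} = ρ S_N + τ Z_{N+1}` with `τ = σ_SH √(1 - ρ²)`. Integrating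
out `M_{N+1}` and `Z_{N+1}` first gives `E[1_{E_{N+1}} h(S_{N+1})] = E[1_{E_N} Φ(S_N)]` with
`Φ(s) = ∫ φ_{τ²}(x - ρ s) F(c - g_{N+1} - x) h(x) dx`. This is `∫ J_N Φ` by the induction
hypothesis, and Fubini turns it into `∫ J_{N+1} h`. Continuity of `F` makes `F(t) = ν((-∞, t))`
the probability that `M_k < t`.
-/

open MeasureTheory ProbabilityTheory Real
open scoped NNReal

theorem cdf_eq_measureReal_Iio_of_continuous {ν : Measure ℝ} [IsProbabilityMeasure ν]
    (hν : Continuous (cdf ν)) (t : ℝ) : cdf ν t = ν.real (Set.Iio t) := by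
  have h := (cdf ν).measure_Iio (tendsto_cdf_atBot ν) t
  rw [measure_cdf, hν.continuousWithinAt.leftLim_eq, sub_zero] at h
  rw [measureReal_def, h, ENNReal.toReal_ofReal (cdf_nonneg ν t)]

theorem norm_indicator_one_mul_le {X : Type*} (s : Set X) (x : X) (y : ℝ) :
    ‖s.indicator 1 x * y‖ ≤ ‖y‖ := by
  rw [norm_mul]
  exact mul_le_of_le_one_left (norm_nonneg y) ((norm_indicator_le_norm_self 1 x).trans_eq norm_one)

theorem norm_measureReal_mul_le {X : Type*} [MeasurableSpace X] {μ : Measure X}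
    [IsZeroOrProbabilityMeasure μ] (s : Set X) {y C : ℝ} (hy : ‖y‖ ≤ C) :
    ‖μ.real s * y‖ ≤ C := by
  rw [norm_mul, Real.norm_of_nonneg measureReal_nonneg]
  exact (mul_le_of_le_one_left (norm_nonneg y) measureReal_le_one).trans hy

theorem measurable_indicator_Iio_one :
    Measurable fun q : ℝ × ℝ => (Set.Iio q.1).indicator (1 : ℝ → ℝ) q.2 :=
  measurable_const.indicator (measurableSet_lt measurable_snd measurable_fst)

theorem integral_prod_indicator_Iio_mul {γ ν : Measure ℝ} [IsFiniteMeasure γ]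
    [IsFiniteMeasure ν] {h : ℝ → ℝ} (hh : Measurable h) {C : ℝ} (hhC : ∀ x, ‖h x‖ ≤ C)
    (a b : ℝ) :
    ∫ y, (Set.Iio (b - (a + y.1))).indicator 1 y.2 * h (a + y.1) ∂(γ.prod ν)
      = ∫ z, ν.real (Set.Iio (b - (a + z))) * h (a + z) ∂γ := by
  have hlin : Measurable fun y : ℝ × ℝ => a + y.1 := by fun_prop
  have hint : Integrable (fun y => (Set.Iio (b - (a + y.1))).indicator 1 y.2 * h (a + y.1))
      (γ.prod ν) :=
    Integrable.of_bound ((measurable_indicator_Iio_one.comp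
      ((measurable_const.sub hlin).prodMk measurable_snd)).mul (hh.comp hlin)).aestronglyMeasurable
      C (ae_of_all _ fun y => (norm_indicator_one_mul_le _ _ _).trans (hhC _))
  rw [integral_prod _ hint]
  simp_rw [integral_mul_const, integral_indicator_one measurableSet_Iio]

namespace ProbabilityTheory

variable {Ω α β : Type*} {mΩ : MeasurableSpace Ω} {P : Measure Ω}
  [MeasurableSpace α] [MeasurableSpace β]

theorem iIndepFun.indepFun_of_measurable_iSup {ι : Type*} {γ : ι → Type*}
    {mγ : ∀ i, MeasurableSpace (γ i)} {f : ∀ i, Ω → γ i} (hf : iIndepFun f P)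
    (hfm : ∀ i, Measurable (f i)) {s t : Set ι} (hst : Disjoint s t) {X : Ω → α} {Y : Ω → β}
    (hX : Measurable[⨆ i ∈ s, (mγ i).comap (f i)] X)
    (hY : Measurable[⨆ i ∈ t, (mγ i).comap (f i)] Y) : IndepFun X Y P := by
  rw [IndepFun_iff_Indep]
  exact indep_of_indep_of_le
    (indep_iSup_of_disjoint (fun i => (hfm i).comap_le) hf.iIndep hst) hX.comap_le hY.comap_le

theorem IndepFun.integral_comp_eq_integral_integral_map [IsFiniteMeasure P]
    {X : Ω → α} {Y : Ω → β} (hXY : IndepFun X Y P) (hX : Measurable X) (hY : Measurable Y)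
    {f : α × β → ℝ} (hf : StronglyMeasurable f)
    (hfi : Integrable (fun ω => f (X ω, Y ω)) P) :
    ∫ ω, f (X ω, Y ω) ∂P = ∫ ω, ∫ y, f (X ω, y) ∂(P.map Y) ∂P := by
  have hlaw : P.map (fun ω => (X ω, Y ω)) = (P.map X).prod (P.map Y) :=
    (indepFun_iff_map_prod_eq_prod_map_map hX.aemeasurable hY.aemeasurable).mp hXY
  have hfi' : Integrable f ((P.map X).prod (P.map Y)) := by
    rw [← hlaw]
    exact (integrable_map_measure hf.aestronglyMeasurable
      (hX.prodMk hY).aemeasurable).mpr hfi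
  calc ∫ ω, f (X ω, Y ω) ∂P = ∫ z, f z ∂((P.map X).prod (P.map Y)) := by
        rw [← hlaw, integral_map (hX.prodMk hY).aemeasurable hf.aestronglyMeasurable]
    _ = ∫ x, ∫ y, f (x, y) ∂(P.map Y) ∂(P.map X) := integral_prod f hfi'
    _ = ∫ ω, ∫ y, f (X ω, y) ∂(P.map Y) ∂P :=
        integral_map hX.aemeasurable hf.integral_prod_right'.aestronglyMeasurable

theorem setIntegral_inter_lt_eq_setIntegral_integral [IsFiniteMeasure P]
    {γ ν : Measure ℝ} [IsFiniteMeasure γ] [IsFiniteMeasure ν]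
    {E : Set Ω} (hE : MeasurableSet E) {s ξ m : Ω → ℝ}
    (hs : Measurable s) (hξ : Measurable ξ) (hm : Measurable m)
    (hindep : IndepFun (fun ω => (E.indicator (1 : Ω → ℝ) ω, s ω)) (fun ω => (ξ ω, m ω)) P)
    (hlaw : P.map (fun ω => (ξ ω, m ω)) = γ.prod ν) (ρ b : ℝ)
    {h : ℝ → ℝ} (hh : Measurable h) {C : ℝ} (hhC : ∀ x, ‖h x‖ ≤ C) :
    ∫ ω in E ∩ {ω | m ω < b - (ρ * s ω + ξ ω)}, h (ρ * s ω + ξ ω) ∂P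
      = ∫ ω in E, ∫ z, ν.real (Set.Iio (b - (ρ * s ω + z))) * h (ρ * s ω + z) ∂γ ∂P := by
  set f : (ℝ × ℝ) × (ℝ × ℝ) → ℝ := fun p =>
    p.1.1 * ((Set.Iio (b - (ρ * p.1.2 + p.2.1))).indicator 1 p.2.2 * h (ρ * p.1.2 + p.2.1))
  have hlin : Measurable fun p : (ℝ × ℝ) × (ℝ × ℝ) => ρ * p.1.2 + p.2.1 := by fun_prop
  have hf : Measurable f := measurable_fst.fst.mul ((measurable_indicator_Iio_one.comp
    ((measurable_const.sub hlin).prodMk measurable_snd.snd)).mul (hh.comp hlin))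
  have hX : Measurable fun ω => (E.indicator (1 : Ω → ℝ) ω, s ω) :=
    (measurable_const.indicator hE).prodMk hs
  have hY : Measurable fun ω => (ξ ω, m ω) := hξ.prodMk hm
  have hfi : Integrable (fun ω => f ((E.indicator (1 : Ω → ℝ) ω, s ω), (ξ ω, m ω))) P :=
    Integrable.of_bound (hf.comp (hX.prodMk hY)).aestronglyMeasurable C (ae_of_all _ fun ω =>
      (norm_indicator_one_mul_le _ _ _).trans ((norm_indicator_one_mul_le _ _ _).trans (hhC _)))
  calc ∫ ω in E ∩ {ω | m ω < b - (ρ * s ω + ξ ω)}, h (ρ * s ω + ξ ω) ∂P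
      = ∫ ω, f ((E.indicator 1 ω, s ω), (ξ ω, m ω)) ∂P := by
        rw [← integral_indicator (hE.inter (measurableSet_lt hm (by fun_prop)))]
        congr with ω
        by_cases hω : ω ∈ E <;> by_cases hmω : m ω < b - (ρ * s ω + ξ ω) <;> simp [f, hω, hmω]
    _ = ∫ ω, ∫ y, f ((E.indicator 1 ω, s ω), y) ∂(γ.prod ν) ∂P := by
        rw [hindep.integral_comp_eq_integral_integral_map hX hY hf.stronglyMeasurable hfi, hlaw]
    _ = ∫ ω, E.indicator (fun ω =>
          ∫ z, ν.real (Set.Iio (b - (ρ * s ω + z))) * h (ρ * s ω + z) ∂γ) ω ∂P := by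
        congr with ω
        simp only [f]
        rw [integral_const_mul, integral_prod_indicator_Iio_mul hh hhC]
        by_cases hω : ω ∈ E <;> simp [hω]
    _ = _ := integral_indicator hE

end ProbabilityTheory

theorem integral_gaussianReal_comp_add {v : ℝ≥0} (hv : v ≠ 0) (q : ℝ → ℝ) (a : ℝ) :
    ∫ z, q (a + z) ∂gaussianReal 0 v = ∫ x, gaussianPDFReal 0 v (x - a) * q x := by
  rw [integral_gaussianReal_eq_integral_smul hv,
    ← integral_sub_right_eq_self (fun x => gaussianPDFReal 0 v (x - a) * q x) (-a)]
  simp [add_comm]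

theorem integrable_comp_sub_mul_mul {p w : ℝ → ℝ} (hpm : Measurable p) (hp : Integrable p)
    (hwm : Measurable w) (hw : Integrable w) (ρ : ℝ) :
    Integrable (fun z : ℝ × ℝ => p (z.1 - ρ * z.2) * w z.2) (volume.prod volume) := by
  rw [integrable_prod_iff' (by fun_prop)]
  refine ⟨ae_of_all _ fun u => (hp.comp_sub_right (ρ * u)).mul_const (w u), ?_⟩
  have hnorm : ∀ u, ∫ x, ‖p (x - ρ * u) * w u‖ = (∫ x, ‖p x‖) * ‖w u‖ := fun u => by
    simp_rw [norm_mul]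
    rw [integral_mul_const, integral_sub_right_eq_self (fun x => ‖p x‖)]
  simp_rw [hnorm]
  exact hw.norm.const_mul _

theorem integral_mul_integral_comp_sub_mul_comm {p w q : ℝ → ℝ} (hpm : Measurable p)
    (hp : Integrable p) (hwm : Measurable w) (hw : Integrable w) (hqm : Measurable q) {C : ℝ}
    (hqC : ∀ x, ‖q x‖ ≤ C) (ρ : ℝ) :
    ∫ u, w u * ∫ x, p (x - ρ * u) * q x = ∫ x, (∫ u, p (x - ρ * u) * w u) * q x := by
  have hint : Integrable (fun z : ℝ × ℝ => q z.1 * (p (z.1 - ρ * z.2) * w z.2))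
      (volume.prod volume) :=
    (integrable_comp_sub_mul_mul hpm hp hwm hw ρ).bdd_mul
      (hqm.comp measurable_fst).aestronglyMeasurable (ae_of_all _ fun z => hqC z.1)
  calc ∫ u, w u * ∫ x, p (x - ρ * u) * q x
      = ∫ u, ∫ x, q x * (p (x - ρ * u) * w u) := by
        congr with u
        rw [← integral_const_mul]
        congr with x
        ring
    _ = ∫ x, ∫ u, q x * (p (x - ρ * u) * w u) := (integral_integral_swap hint).symm
    _ = ∫ x, (∫ u, p (x - ρ * u) * w u) * q x := by
        congr with x
        rw [integral_const_mul, mul_comm]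

/-- The paper's `J_k`, for thresholds `b k = c - g k`, variances `v₀ = σ_SH²` and
`v = σ_SH² (1 - ρ²)`, and with `ν((-∞, t))` in place of `F(t)`. -/
noncomputable def survivalDensity (ν : Measure ℝ) (v₀ v : ℝ≥0) (ρ : ℝ) (b : ℕ → ℝ) :
    ℕ → ℝ → ℝ
  | 0, x => ν.real (Set.Iio (b 0 - x)) * gaussianPDFReal 0 v₀ x
  | k + 1, x => ν.real (Set.Iio (b (k + 1) - x)) *
      ∫ u, gaussianPDFReal 0 v (x - ρ * u) * survivalDensity ν v₀ v ρ b k u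

theorem measurable_measureReal_Iio_sub (ν : Measure ℝ) [IsFiniteMeasure ν] (b : ℝ) :
    Measurable fun x => ν.real (Set.Iio (b - x)) := by
  have hmono : Monotone fun t => ν.real (Set.Iio t) := fun _ _ hst =>
    measureReal_mono (Set.Iio_subset_Iio hst)
  exact hmono.measurable.comp (measurable_const.sub measurable_id)

namespace survivalDensity

variable {ν : Measure ℝ} {v₀ v : ℝ≥0} {ρ : ℝ} {b : ℕ → ℝ}

theorem measurable [IsFiniteMeasure ν] (k : ℕ) : Measurable (survivalDensity ν v₀ v ρ b k) := by
  induction k with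
  | zero => exact (measurable_measureReal_Iio_sub ν _).mul (measurable_gaussianPDFReal 0 v₀)
  | succ k ih =>
    have hker : Measurable fun p : ℝ × ℝ =>
        gaussianPDFReal 0 v (p.1 - ρ * p.2) * survivalDensity ν v₀ v ρ b k p.2 := by
      fun_prop
    exact (measurable_measureReal_Iio_sub ν _).mul
      hker.stronglyMeasurable.integral_prod_right'.measurable

theorem integrable [IsFiniteMeasure ν] (k : ℕ) : Integrable (survivalDensity ν v₀ v ρ b k) := by
  have hIio_le : ∀ t, ‖ν.real (Set.Iio t)‖ ≤ ν.real Set.univ := fun t => by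
    rw [Real.norm_of_nonneg measureReal_nonneg]
    exact measureReal_mono (Set.subset_univ _)
  induction k with
  | zero =>
    exact (integrable_gaussianPDFReal 0 v₀).bdd_mul
      (measurable_measureReal_Iio_sub ν _).aestronglyMeasurable (ae_of_all _ fun x => hIio_le _)
  | succ k ih =>
    exact ((integrable_comp_sub_mul_mul (measurable_gaussianPDFReal 0 v)
      (integrable_gaussianPDFReal 0 v) (measurable k) ih ρ).integral_prod_left).bdd_mul
      (measurable_measureReal_Iio_sub ν _).aestronglyMeasurable (ae_of_all _ fun x => hIio_le _)

theorem integral_succ_mul [IsProbabilityMeasure ν] (hv : v ≠ 0) (k : ℕ) {h : ℝ → ℝ}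
    (hh : Measurable h) {C : ℝ} (hhC : ∀ x, ‖h x‖ ≤ C) :
    ∫ x, survivalDensity ν v₀ v ρ b (k + 1) x * h x
      = ∫ u, survivalDensity ν v₀ v ρ b k u *
          ∫ z, ν.real (Set.Iio (b (k + 1) - (ρ * u + z))) * h (ρ * u + z) ∂gaussianReal 0 v := by
  set q : ℝ → ℝ := fun x => ν.real (Set.Iio (b (k + 1) - x)) * h x
  have hqC : ∀ x, ‖q x‖ ≤ C := fun x => norm_measureReal_mul_le _ (hhC x)
  calc ∫ x, survivalDensity ν v₀ v ρ b (k + 1) x * h x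
      = ∫ x, (∫ u, gaussianPDFReal 0 v (x - ρ * u) * survivalDensity ν v₀ v ρ b k u) * q x := by
        congr with x
        simp only [survivalDensity, q]
        ring
    _ = ∫ u, survivalDensity ν v₀ v ρ b k u * ∫ x, gaussianPDFReal 0 v (x - ρ * u) * q x :=
        (integral_mul_integral_comp_sub_mul_comm (measurable_gaussianPDFReal _ _)
          (integrable_gaussianPDFReal _ _) (measurable k) (integrable k)
          ((measurable_measureReal_Iio_sub ν _).mul hh) hqC ρ).symm
    _ = _ := by
        congr with u
        rw [integral_gaussianReal_comp_add hv q]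

end survivalDensity

section Shadowing

variable {Ω : Type*} {mΩ : MeasurableSpace Ω} {P : Measure Ω}

theorem map_const_mul_prodMk_eq_prod [IsFiniteMeasure P] {X Y : Ω → ℝ}
    (hX : Measurable X) (hY : Measurable Y) (hXY : IndepFun X Y P)
    (hXlaw : P.map X = gaussianReal 0 1) {ν : Measure ℝ} (hYlaw : P.map Y = ν) (a : ℝ) :
    P.map (fun ω => (a * X ω, Y ω)) = (gaussianReal 0 (.mk (a ^ 2) (sq_nonneg a))).prod ν := by
  have haX : P.map (fun ω => a * X ω) = gaussianReal 0 (.mk (a ^ 2) (sq_nonneg a)) := by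
    rw [← Function.comp_def (a * ·) X, ← Measure.map_map (measurable_const_mul a) hX, hXlaw,
      gaussianReal_map_const_mul, mul_zero, mul_one]
  rw [← haX, ← hYlaw]
  exact (indepFun_iff_map_prod_eq_prod_map_map (hX.const_mul a).aemeasurable
    hY.aemeasurable).mp (hXY.comp (measurable_const_mul a) measurable_id)

theorem measurable_ar1 {m : MeasurableSpace Ω} {Z S : ℕ → Ω → ℝ} {σ ρ τ : ℝ}
    (hS0 : ∀ ω, S 0 ω = σ * Z 0 ω) (hS : ∀ k ω, S (k + 1) ω = ρ * S k ω + τ * Z (k + 1) ω)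
    {N : ℕ} (hZ : ∀ k ≤ N, Measurable[m] (Z k)) : ∀ k ≤ N, Measurable[m] (S k) := by
  intro k hk
  induction k with
  | zero =>
    rw [funext hS0]
    exact (hZ 0 hk).const_mul σ
  | succ k ih =>
    rw [funext (hS k)]
    exact ((ih (by omega)).const_mul ρ).add ((hZ (k + 1) hk).const_mul τ)

theorem measurableSet_forall_lt_sub {m : MeasurableSpace Ω} {M S : ℕ → Ω → ℝ} (b : ℕ → ℝ)
    {N : ℕ} (hM : ∀ k ≤ N, Measurable[m] (M k)) (hS : ∀ k ≤ N, Measurable[m] (S k)) :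
    MeasurableSet[m] {ω | ∀ k ≤ N, M k ω < b k - S k ω} := by
  simp only [Set.ofPred_forall]
  exact MeasurableSet.iInter fun k => MeasurableSet.iInter fun hk =>
    measurableSet_lt (hM k hk) (measurable_const.sub (hS k hk))

theorem indepFun_survival_innovation {Z M S : ℕ → Ω → ℝ} (hZ : ∀ k, Measurable (Z k))
    (hM : ∀ k, Measurable (M k)) (hindep : iIndepFun (Sum.elim Z M) P) {σ ρ τ : ℝ}
    (hS0 : ∀ ω, S 0 ω = σ * Z 0 ω) (hS : ∀ k ω, S (k + 1) ω = ρ * S k ω + τ * Z (k + 1) ω)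
    (b : ℕ → ℝ) (N : ℕ) (a : ℝ) :
    IndepFun (fun ω => ({ω | ∀ k ≤ N, M k ω < b k - S k ω}.indicator (1 : Ω → ℝ) ω, S N ω))
      (fun ω => (a * Z (N + 1) ω, M (N + 1) ω)) P := by
  let 𝓕 : Set (ℕ ⊕ ℕ) → MeasurableSpace Ω := fun s =>
    ⨆ i ∈ s, MeasurableSpace.comap (Sum.elim Z M i) inferInstance
  have hgen : ∀ {s} i, i ∈ s → Measurable[𝓕 s] (Sum.elim Z M i) := fun {s} i hi =>
    Measurable.of_comap_le
      (le_iSup₂ (f := fun i (_ : i ∈ s) => MeasurableSpace.comap (Sum.elim Z M i) _) i hi)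
  let past : Set (ℕ ⊕ ℕ) := {i | Sum.elim id id i ≤ N}
  let next : Set (ℕ ⊕ ℕ) := {i | Sum.elim id id i = N + 1}
  have hdisj : Disjoint past next := Set.disjoint_left.mpr fun i hi hi' => by
    simp only [past, next, Set.mem_ofPred_eq] at hi hi'
    omega
  have hSpast : ∀ k ≤ N, Measurable[𝓕 past] (S k) :=
    measurable_ar1 hS0 hS fun k hk => hgen (Sum.inl k) hk
  have hEpast : MeasurableSet[𝓕 past] {ω | ∀ k ≤ N, M k ω < b k - S k ω} :=
    measurableSet_forall_lt_sub b (fun k hk => hgen (Sum.inr k) hk) hSpast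
  have hX : Measurable[𝓕 past] fun ω =>
      ({ω | ∀ k ≤ N, M k ω < b k - S k ω}.indicator (1 : Ω → ℝ) ω, S N ω) :=
    (measurable_const.indicator hEpast).prodMk (hSpast N le_rfl)
  have hY : Measurable[𝓕 next] fun ω => (a * Z (N + 1) ω, M (N + 1) ω) :=
    (Measurable.const_mul (hgen (s := next) (Sum.inl (N + 1)) (by simp [next])) a).prodMk
      (hgen (s := next) (Sum.inr (N + 1)) (by simp [next]))
  refine hindep.indepFun_of_measurable_iSup (γ := fun _ => ℝ) (fun i => ?_) hdisj hX hY
  cases i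
  exacts [hZ _, hM _]

theorem setIntegral_survival_zero [IsProbabilityMeasure P] {X Y : Ω → ℝ} (hX : Measurable X)
    (hY : Measurable Y) (hXY : IndepFun X Y P) (hXlaw : P.map X = gaussianReal 0 1)
    {ν : Measure ℝ} [IsProbabilityMeasure ν] (hYlaw : P.map Y = ν) {σ : ℝ} (hσ : σ ≠ 0)
    (b : ℝ) {h : ℝ → ℝ} (hh : Measurable h) {C : ℝ} (hhC : ∀ x, ‖h x‖ ≤ C) :
    ∫ ω in {ω | Y ω < b - σ * X ω}, h (σ * X ω) ∂P
      = ∫ x, ν.real (Set.Iio (b - x)) * gaussianPDFReal 0 (.mk (σ ^ 2) (sq_nonneg σ)) x * h x := by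
  have hind : IndepFun (fun ω => ((Set.univ : Set Ω).indicator (1 : Ω → ℝ) ω, (0 : ℝ)))
      (fun ω => (σ * X ω, Y ω)) P := by
    simpa using indepFun_const_left ((1 : ℝ), (0 : ℝ)) (fun ω => (σ * X ω, Y ω))
  have hstep := setIntegral_inter_lt_eq_setIntegral_integral (s := fun _ => 0)
    MeasurableSet.univ measurable_const (hX.const_mul σ) hY hind
    (map_const_mul_prodMk_eq_prod hX hY hXY hXlaw hYlaw σ) 0 b hh hhC
  simp only [Set.univ_inter, zero_mul, zero_add, Measure.restrict_univ, integral_const,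
    probReal_univ, one_smul] at hstep
  rw [hstep, integral_gaussianReal_eq_integral_smul (by simpa [← NNReal.coe_ne_zero] using hσ)]
  congr with x
  simp only [smul_eq_mul]
  ring

theorem setIntegral_survival_succ [IsProbabilityMeasure P] {Z M S : ℕ → Ω → ℝ}
    (hZ : ∀ k, Measurable (Z k)) (hM : ∀ k, Measurable (M k))
    (hindep : iIndepFun (Sum.elim Z M) P) (hZlaw : ∀ k, P.map (Z k) = gaussianReal 0 1)
    {ν : Measure ℝ} [IsProbabilityMeasure ν] (hMlaw : ∀ k, P.map (M k) = ν)
    {σ ρ τ : ℝ} (hτ : τ ≠ 0) (hS0 : ∀ ω, S 0 ω = σ * Z 0 ω)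
    (hS : ∀ k ω, S (k + 1) ω = ρ * S k ω + τ * Z (k + 1) ω) (b : ℕ → ℝ) {v₀ : ℝ≥0} {N : ℕ}
    (ih : ∀ {h : ℝ → ℝ}, Measurable h → ∀ {C : ℝ}, (∀ x, ‖h x‖ ≤ C) →
      ∫ ω in {ω | ∀ k ≤ N, M k ω < b k - S k ω}, h (S N ω) ∂P
        = ∫ x, survivalDensity ν v₀ (.mk (τ ^ 2) (sq_nonneg τ)) ρ b N x * h x)
    {h : ℝ → ℝ} (hh : Measurable h) {C : ℝ} (hhC : ∀ x, ‖h x‖ ≤ C) :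
    ∫ ω in {ω | ∀ k ≤ N + 1, M k ω < b k - S k ω}, h (S (N + 1) ω) ∂P
      = ∫ x, survivalDensity ν v₀ (.mk (τ ^ 2) (sq_nonneg τ)) ρ b (N + 1) x * h x := by
  set E := {ω | ∀ k ≤ N, M k ω < b k - S k ω}
  have hE : {ω | ∀ k ≤ N + 1, M k ω < b k - S k ω}
      = E ∩ {ω | M (N + 1) ω < b (N + 1) - (ρ * S N ω + τ * Z (N + 1) ω)} := by
    ext ω
    simp [E, Nat.le_succ_iff, or_imp, forall_and, hS]
  have hSm : ∀ k ≤ N, Measurable (S k) := measurable_ar1 hS0 hS fun k _ => hZ k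
  set Φ : ℝ → ℝ := fun s => ∫ z, ν.real (Set.Iio (b (N + 1) - (ρ * s + z))) * h (ρ * s + z)
    ∂gaussianReal 0 (.mk (τ ^ 2) (sq_nonneg τ))
  have hΦm : Measurable Φ := by
    have hlin : Measurable fun p : ℝ × ℝ => ρ * p.1 + p.2 := by fun_prop
    exact (((measurable_measureReal_Iio_sub ν _).comp hlin).mul (hh.comp hlin)).stronglyMeasurable
      |>.integral_prod_right'.measurable
  have hΦC : ∀ s, ‖Φ s‖ ≤ C := fun s =>
    (norm_integral_le_of_norm_le_const (ae_of_all _ fun z =>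
      norm_measureReal_mul_le _ (hhC _))).trans_eq (by rw [probReal_univ, mul_one])
  calc ∫ ω in {ω | ∀ k ≤ N + 1, M k ω < b k - S k ω}, h (S (N + 1) ω) ∂P
      = ∫ ω in E ∩ {ω | M (N + 1) ω < b (N + 1) - (ρ * S N ω + τ * Z (N + 1) ω)},
          h (ρ * S N ω + τ * Z (N + 1) ω) ∂P := by
        simp_rw [hE, hS]
    _ = ∫ ω in E, Φ (S N ω) ∂P :=
        setIntegral_inter_lt_eq_setIntegral_integral
          (measurableSet_forall_lt_sub b (fun k _ => hM k) hSm) (hSm N le_rfl)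
          ((hZ (N + 1)).const_mul τ) (hM (N + 1))
          (indepFun_survival_innovation hZ hM hindep hS0 hS b N τ)
          (map_const_mul_prodMk_eq_prod (hZ _) (hM _) (hindep.indepFun Sum.inl_ne_inr)
            (hZlaw _) (hMlaw _) τ) ρ (b (N + 1)) hh hhC
    _ = ∫ u, survivalDensity ν v₀ _ ρ b N u * Φ u := ih hΦm hΦC
    _ = _ := (survivalDensity.integral_succ_mul
          (by simpa [← NNReal.coe_ne_zero] using hτ) N hh hhC).symm

theorem setIntegral_survival_eq_integral_survivalDensity [IsProbabilityMeasure P]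
    {Z M S : ℕ → Ω → ℝ} (hZ : ∀ k, Measurable (Z k)) (hM : ∀ k, Measurable (M k))
    (hindep : iIndepFun (Sum.elim Z M) P) (hZlaw : ∀ k, P.map (Z k) = gaussianReal 0 1)
    {ν : Measure ℝ} [IsProbabilityMeasure ν] (hMlaw : ∀ k, P.map (M k) = ν)
    {σ ρ τ : ℝ} (hσ : σ ≠ 0) (hτ : τ ≠ 0)
    (hS0 : ∀ ω, S 0 ω = σ * Z 0 ω) (hS : ∀ k ω, S (k + 1) ω = ρ * S k ω + τ * Z (k + 1) ω)
    (b : ℕ → ℝ) (N : ℕ) {h : ℝ → ℝ} (hh : Measurable h) {C : ℝ} (hhC : ∀ x, ‖h x‖ ≤ C) :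
    ∫ ω in {ω | ∀ k ≤ N, M k ω < b k - S k ω}, h (S N ω) ∂P
      = ∫ x, survivalDensity ν (.mk (σ ^ 2) (sq_nonneg σ)) (.mk (τ ^ 2) (sq_nonneg τ)) ρ b N x
          * h x := by
  induction N generalizing h C with
  | zero =>
    simp only [Nat.le_zero, forall_eq, hS0]
    exact setIntegral_survival_zero (hZ 0) (hM 0) (hindep.indepFun Sum.inl_ne_inr) (hZlaw 0)
      (hMlaw 0) hσ (b 0) hh hhC
  | succ N ih =>
    exact setIntegral_survival_succ hZ hM hindep hZlaw hMlaw hτ hS0 hS b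
      (fun hh' _ hC' => ih hh' hC') hh hhC

end Shadowing

/-- For the discretized channel power `Γ_k = g_k + S_k + M_k` (path loss
plus AR(1) Gaussian shadowing plus i.i.d. multipath with continuous CDF `F`), the
probability that connectivity fails at all of the first `N+1` steps is given by the
recursively defined functions `J_k`:
`P(Γ_k < c for all k ≤ N) = ∫ J_N(x) dx`. -/
theorem stmt_16
    {Ω : Type*} [MeasurableSpace Ω] (P : Measure Ω) [IsProbabilityMeasure P]
    -- i.i.d. standard Gaussian shadowing innovations and i.i.d. multipath values,
    -- with the two families mutually independent
    (Z : ℕ → Ω → ℝ) (M : ℕ → Ω → ℝ)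
    (hZmeas : ∀ k, Measurable (Z k)) (hMmeas : ∀ k, Measurable (M k))
    (hindep : iIndepFun (Sum.elim Z M : ℕ ⊕ ℕ → Ω → ℝ) P)
    (hZlaw : ∀ k, Measure.map (Z k) P = gaussianReal 0 1)
    (ν : Measure ℝ) [IsProbabilityMeasure ν]
    (hMlaw : ∀ k, Measure.map (M k) P = ν)
    -- the (continuous) CDF of the multipath law
    (F : ℝ → ℝ) (hF : ∀ t, F t = (ν (Set.Iic t)).toReal) (hFcont : Continuous F)
    -- parameters
    (σSH βSH Δd : ℝ) (hσ : 0 < σSH) (hβ : 0 < βSH) (hΔd : 0 < Δd)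
    (ρ : ℝ) (hρ : ρ = Real.exp (-Δd / βSH))
    (g : ℕ → ℝ) (c : ℝ)
    -- the AR(1) shadowing process
    (S : ℕ → Ω → ℝ)
    (hS0 : ∀ ω, S 0 ω = σSH * Z 0 ω)
    (hSsucc : ∀ k ω, S (k + 1) ω =
      ρ * S k ω + σSH * Real.sqrt (1 - ρ ^ 2) * Z (k + 1) ω)
    -- the channel power process
    (Γ : ℕ → Ω → ℝ)
    (hΓ : ∀ k ω, Γ k ω = g k + S k ω + M k ω)
    -- the centered Gaussian density with variance `v`
    (φ : ℝ → ℝ → ℝ)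
    (hφ : ∀ v t, φ v t = (Real.sqrt (2 * π * v))⁻¹ * Real.exp (-t ^ 2 / (2 * v)))
    -- the recursively defined functions `J_k`
    (J : ℕ → ℝ → ℝ)
    (hJ0 : ∀ x, J 0 x = F (c - g 0 - x) * φ (σSH ^ 2) x)
    (hJsucc : ∀ k x, J (k + 1) x =
      F (c - g (k + 1) - x) *
        ∫ u, φ (σSH ^ 2 * (1 - ρ ^ 2)) (x - ρ * u) * J k u) :
    ∀ N : ℕ,
      (P {ω | ∀ k ≤ N, Γ k ω < c}).toReal = ∫ x, J N x := by
  intro N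
  set τ := σSH * Real.sqrt (1 - ρ ^ 2)
  have hρ0 : 0 < ρ := hρ ▸ exp_pos _
  have hρ1 : ρ < 1 := hρ ▸ exp_lt_one_iff.mpr (div_neg_of_neg_of_pos (neg_neg_of_pos hΔd) hβ)
  have h1ρ : 0 < 1 - ρ ^ 2 := by nlinarith
  have hτ2 : σSH ^ 2 * (1 - ρ ^ 2) = τ ^ 2 := by rw [mul_pow, sq_sqrt h1ρ.le]
  have hFν : ∀ t, F t = ν.real (Set.Iio t) := by
    have hcdf : cdf ν = F := funext fun t => by rw [cdf_eq_real, hF, measureReal_def]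
    exact hcdf ▸ cdf_eq_measureReal_Iio_of_continuous (hcdf ▸ hFcont)
  have hφpdf : ∀ a t, φ (a ^ 2) t = gaussianPDFReal 0 (.mk (a ^ 2) (sq_nonneg a)) t := by
    simp [hφ, gaussianPDFReal]
  have hJ : J N = survivalDensity ν (.mk (σSH ^ 2) (sq_nonneg σSH)) (.mk (τ ^ 2) (sq_nonneg τ))
      ρ (fun k => c - g k) N := by
    induction N with
    | zero => funext x; simp [survivalDensity, hJ0, hFν, hφpdf]
    | succ N ih => funext x; simp [survivalDensity, hJsucc, hFν, hτ2, hφpdf, ih]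
  have hE : {ω | ∀ k ≤ N, Γ k ω < c} = {ω | ∀ k ≤ N, M k ω < c - g k - S k ω} := by
    ext ω
    exact forall₂_congr fun k _ => by rw [hΓ]; constructor <;> intro <;> linarith
  have key := setIntegral_survival_eq_integral_survivalDensity hZmeas hMmeas hindep hZlaw hMlaw
    hσ.ne' (mul_ne_zero hσ.ne' (sqrt_ne_zero'.mpr h1ρ)) hS0 hSsucc (fun k => c - g k) N
    (h := fun _ => 1) measurable_const (fun _ => norm_one.le)
  rw [setIntegral_const, smul_eq_mul, mul_one, ← hE] at key
  simpa [measureReal_def, hJ] using key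
end
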